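/- arXiv:2302.11890 — 9 statements merged into one kernel-verified Lean document; each statement's English description precedes it below -/
import Mathlib

section
/- An approval-based committee (ABC) voting rule f is committee monotone if and only if there exists a generator function g that generates f, i.e., for every profile A and every committee size k ≥ 1, f(A,k) = {W ∪ {x} : W ∈ f(A,k-1), x ∈ g(A,W)} and g(A,W) ≠ ∅ whenever W ∈ f(A,k-1). -/
open Finset
open scoped Classical

structure Profile (C : Type) where
  voters : Finset ℕ
  ballot : ℕ → Finset C

namespace Profile

variable {C : Type}

def combine (A B : Profile C) : Profile C :=
  ⟨A.voters ∪ B.voters, fun i => if i ∈ A.voters then A.ballot i else B.ballot i⟩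

def Disj (A B : Profile C) : Prop := Disjoint A.voters B.voters

def permVoters (π : Equiv.Perm ℕ) (A : Profile C) : Profile C :=
  ⟨A.voters.map π.toEmbedding, fun i => A.ballot (π.symm i)⟩

def mapCand [DecidableEq C] (τ : Equiv.Perm C) (A : Profile C) : Profile C :=
  ⟨A.voters, fun i => (A.ballot i).image τ⟩

end Profile

variable {C : Type} [Fintype C] [DecidableEq C]

/-- An ABC voting rule: chooses `{∅}` for size `0` and a nonempty set of size-`k`
committees for every feasible committee size `k`. -/
def IsABCRule (f : Profile C → ℕ → Finset (Finset C)) : Prop :=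
  (∀ A, f A 0 = {∅}) ∧
  (∀ A k, k ≤ Fintype.card C → (f A k).Nonempty) ∧
  (∀ A k W, W ∈ f A k → W.card = k)

/-- A generator function returns a subset of the unchosen candidates. -/
def IsGenerator (g : Profile C → Finset C → Finset C) : Prop :=
  ∀ A W, g A W ⊆ univ \ W

/-- `g` generates `f`: the winning committees of size `k` are obtained by extending the winning
committees of size `k-1` with the candidates chosen by `g`, which is nonempty on them. -/
def Generates (g : Profile C → Finset C → Finset C)
    (f : Profile C → ℕ → Finset (Finset C)) : Prop :=
  ∀ A k, 1 ≤ k → k ≤ Fintype.card C →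
    (∀ W ∈ f A (k-1), (g A W).Nonempty) ∧
    f A k = (f A (k-1)).biUnion fun W => (g A W).image fun x => insert x W

/-- Consistency of a generator function. -/
def ConsistentGen (g : Profile C → Finset C → Finset C) : Prop :=
  ∀ A A' W, Profile.Disj A A' → W ≠ univ →
    (g A W ∩ g A' W).Nonempty → (g (A.combine A') W).Nonempty →
    g (A.combine A') W = g A W ∩ g A' W

/-- Committee monotonicity: winners of size `k` extend winners of size `k-1` and vice versa. -/
def CommitteeMonotone (f : Profile C → ℕ → Finset (Finset C)) : Prop :=
  ∀ A k, 1 ≤ k → k ≤ Fintype.card C →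
    (∀ W ∈ f A k, ∃ W' ∈ f A (k-1), W' ⊆ W) ∧
    (∀ W' ∈ f A (k-1), ∃ W ∈ f A k, W' ⊆ W)

lemma exists_insert_of_subset_card {W V : Finset C} (hWV : W ⊆ V)
    (hc : W.card + 1 = V.card) : ∃ x ∉ W, V = insert x W := by
  have h1 : (V \ W).card = 1 := by
    rw [card_sdiff_of_subset hWV]; omega
  obtain ⟨x, hx⟩ := card_eq_one.mp h1
  have hxV : x ∈ V \ W := by rw [hx]; exact mem_singleton_self x
  refine ⟨x, (mem_sdiff.mp hxV).2, ?_⟩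
  apply Finset.Subset.antisymm
  · intro y hy
    by_cases hyW : y ∈ W
    · exact mem_insert_of_mem hyW
    · have : y ∈ V \ W := mem_sdiff.mpr ⟨hy, hyW⟩
      rw [hx] at this
      simp [mem_singleton.mp this]
  · intro y hy
    rcases mem_insert.mp hy with h | h
    · exact h ▸ (mem_sdiff.mp hxV).1
    · exact hWV h

/-- An ABC voting rule is committee monotone iff it is generated by a generator function. -/
theorem committeeMonotone_iff_generated (f : Profile C → ℕ → Finset (Finset C))
    (hf : IsABCRule f) :
    CommitteeMonotone f ↔
      ∃ g : Profile C → Finset C → Finset C, IsGenerator g ∧ Generates g f := by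
  obtain ⟨hf0, hfne, hfcard⟩ := hf
  constructor
  · intro hmono
    refine ⟨fun A W => (univ \ W).filter (fun x => insert x W ∈ f A (W.card + 1)), ?_, ?_⟩
    · intro A W; exact filter_subset _ _
    · intro A k hk1 hkm
      obtain ⟨h1, h2⟩ := hmono A k hk1 hkm
      constructor
      · intro W hW
        obtain ⟨V, hV, hWV⟩ := h2 W hW
        have hcW : W.card = k - 1 := hfcard A (k-1) W hW
        have hcV : V.card = k := hfcard A k V hV
        obtain ⟨x, hxW, hVx⟩ := exists_insert_of_subset_card hWV (by omega)
        refine ⟨x, mem_filter.mpr ⟨mem_sdiff.mpr ⟨mem_univ x, hxW⟩, ?_⟩⟩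
        rw [hcW, ← hVx]
        have : k - 1 + 1 = k := by omega
        rw [this]; exact hV
      · ext V
        simp only [mem_biUnion, mem_image, mem_filter, mem_sdiff, mem_univ, true_and]
        constructor
        · intro hV
          obtain ⟨W, hW, hWV⟩ := h1 V hV
          have hcW : W.card = k - 1 := hfcard A (k-1) W hW
          have hcV : V.card = k := hfcard A k V hV
          obtain ⟨x, hxW, hVx⟩ := exists_insert_of_subset_card hWV (by omega)
          refine ⟨W, hW, x, ⟨hxW, ?_⟩, hVx.symm⟩
          rw [hcW, ← hVx]
          have : k - 1 + 1 = k := by omega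
          rw [this]; exact hV
        · rintro ⟨W, hW, x, ⟨hxW, hins⟩, rfl⟩
          have hcW : W.card = k - 1 := hfcard A (k-1) W hW
          have : W.card + 1 = k := by omega
          rwa [this] at hins
  · rintro ⟨g, hg, hgen⟩
    intro A k hk1 hkm
    obtain ⟨hne, heq⟩ := hgen A k hk1 hkm
    constructor
    · intro W hW
      rw [heq] at hW
      obtain ⟨W', hW', hx⟩ := mem_biUnion.mp hW
      obtain ⟨x, _, rfl⟩ := mem_image.mp hx
      exact ⟨W', hW', subset_insert x W'⟩
    · intro W' hW'
      obtain ⟨x, hx⟩ := hne W' hW'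
      refine ⟨insert x W', ?_, subset_insert x W'⟩
      rw [heq]
      exact mem_biUnion.mpr ⟨W', hW', mem_image.mpr ⟨x, hx, rfl⟩⟩
end

section
/- For every valuation function v, the generator function g(A,W) = {x ∈ C\W : ∀y ∈ C\W, s_v(A, W∪{x}) ≥ s_v(A, W∪{y})} is consistent: for all disjoint profiles A, A' and all committees W ≠ C, if g(A,W) ∩ g(A',W) ≠ ∅ then g(A+A',W) = g(A,W) ∩ g(A',W). Consequently every sequential valuation rule is consistently committee monotone. -/
open Finset
open scoped Classical

variable {C : Type} [Fintype C] [DecidableEq C]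

noncomputable def scoreV (v : Finset C → Finset C → ℝ) (A : Profile C) (W : Finset C) : ℝ :=
  ∑ i ∈ A.voters, v (A.ballot i) W

/-- The candidates whose addition to `W` maximizes the total score. -/
noncomputable def genOf (v : Finset C → Finset C → ℝ) (A : Profile C) (W : Finset C) : Finset C :=
  (univ \ W).filter fun x => ∀ y ∈ univ \ W, scoreV v A (insert y W) ≤ scoreV v A (insert x W)

/-- The sequential valuation rule induced by the valuation function `v`. -/
noncomputable def seqRule (v : Finset C → Finset C → ℝ) : Profile C → ℕ → Finset (Finset C)
  | _, 0 => {∅}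
  | A, k+1 => (seqRule v A k).biUnion fun W => (genOf v A W).image fun x => insert x W

lemma scoreV_combine (v : Finset C → Finset C → ℝ) {A A' : Profile C} (h : A.Disj A')
    (W : Finset C) : scoreV v (A.combine A') W = scoreV v A W + scoreV v A' W := by
  unfold scoreV Profile.combine
  rw [Finset.sum_union h]
  congr 1
  · exact Finset.sum_congr rfl fun i hi => by simp [hi]
  · refine Finset.sum_congr rfl fun i hi => ?_
    have : i ∉ A.voters := fun hA => Finset.disjoint_left.mp h hA hi
    simp [this]

lemma mem_genOf {v : Finset C → Finset C → ℝ} {A : Profile C} {W : Finset C} {x : C} :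
    x ∈ genOf v A W ↔ x ∈ univ \ W ∧
      ∀ y ∈ univ \ W, scoreV v A (insert y W) ≤ scoreV v A (insert x W) := by
  simp [genOf]

lemma genOf_nonempty (v : Finset C → Finset C → ℝ) (A : Profile C) {W : Finset C}
    (hW : W ≠ univ) : (genOf v A W).Nonempty := by
  have hne : (univ \ W).Nonempty := by
    rw [sdiff_nonempty]
    exact fun h => hW (le_antisymm (subset_univ W) h)
  obtain ⟨x, hx, hmax⟩ := Finset.exists_max_image (univ \ W)
    (fun x => scoreV v A (insert x W)) hne
  exact ⟨x, mem_genOf.mpr ⟨hx, hmax⟩⟩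

lemma genOf_consistent (v : Finset C → Finset C → ℝ) (A A' : Profile C) (W : Finset C)
    (hD : A.Disj A') (hW : W ≠ univ)
    (hne : (genOf v A W ∩ genOf v A' W).Nonempty) :
    genOf v (A.combine A') W = genOf v A W ∩ genOf v A' W := by
  obtain ⟨z, hz⟩ := hne
  rw [mem_inter] at hz
  obtain ⟨hzW, hzA⟩ := mem_genOf.mp hz.1
  obtain ⟨_, hzA'⟩ := mem_genOf.mp hz.2
  ext x
  rw [mem_inter, mem_genOf, mem_genOf, mem_genOf]
  constructor
  · rintro ⟨hxW, hmax⟩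
    have hxz := hmax z hzW
    have h1 : scoreV v A (insert x W) ≤ scoreV v A (insert z W) := hzA x hxW
    have h2 : scoreV v A' (insert x W) ≤ scoreV v A' (insert z W) := hzA' x hxW
    rw [scoreV_combine v hD, scoreV_combine v hD] at hxz
    have e1 : scoreV v A (insert x W) = scoreV v A (insert z W) := by linarith
    have e2 : scoreV v A' (insert x W) = scoreV v A' (insert z W) := by linarith
    exact ⟨⟨hxW, fun y hy => e1 ▸ hzA y hy⟩, ⟨hxW, fun y hy => e2 ▸ hzA' y hy⟩⟩
  · rintro ⟨⟨hxW, hA⟩, ⟨_, hA'⟩⟩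
    refine ⟨hxW, fun y hy => ?_⟩
    rw [scoreV_combine v hD, scoreV_combine v hD]
    exact add_le_add (hA y hy) (hA' y hy)

lemma seqRule_card (v : Finset C → Finset C → ℝ) (A : Profile C) :
    ∀ k W, W ∈ seqRule v A k → W.card = k := by
  intro k
  induction k with
  | zero => intro W hW; simp [seqRule] at hW; simp [hW]
  | succ n ih =>
    intro W hW
    simp only [seqRule, mem_biUnion, mem_image] at hW
    obtain ⟨U, hU, x, hx, rfl⟩ := hW
    have hxU : x ∉ U := by
      have := mem_genOf.mp hx
      exact fun h => (mem_sdiff.mp this.1).2 h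
    rw [card_insert_of_notMem hxU, ih U hU]

/-- For every valuation function `v`, the score-maximizing generator function is consistent
(even without the nonemptiness proviso); consequently, the sequential valuation rule induced
by `v` is consistently committee monotone, i.e. generated by a consistent generator function. -/
theorem genOf_consistent_and_seqRule_consistentlyCommitteeMonotone
    (v : Finset C → Finset C → ℝ) :
    (∀ (A A' : Profile C) (W : Finset C), A.Disj A' → W ≠ univ →
        (genOf v A W ∩ genOf v A' W).Nonempty →
        genOf v (A.combine A') W = genOf v A W ∩ genOf v A' W) ∧
    (∃ g : Profile C → Finset C → Finset C,
        IsGenerator g ∧ ConsistentGen g ∧ Generates g (seqRule v)) := by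
  refine ⟨fun A A' W hD hW hne => genOf_consistent v A A' W hD hW hne, genOf v, ?_, ?_, ?_⟩
  · intro A W
    exact filter_subset _ _
  · intro A A' W hD hW hne _
    exact genOf_consistent v A A' W hD hW hne
  · intro A k hk1 hk2
    constructor
    · intro W hW
      apply genOf_nonempty
      intro h
      have := seqRule_card v A (k-1) W hW
      rw [h, card_univ] at this
      omega
    · obtain ⟨n, rfl⟩ : ∃ n, k = n + 1 := ⟨k - 1, by omega⟩
      simp [seqRule]
end

section
/- Let g be a generator function of an ABC voting rule f that is consistent. For all disjoint profiles A, A' and every sequence of committees W_1 ⊆ ... ⊆ W_ℓ with |W_k| = k such that f(A,k) = {W_k}, W_k ∈ f(A',k), and W_k \ W_{k-1} ⊆ g(A', W_{k-1}) for all k ∈ {1,...,ℓ}, it holds that f(A+A',k) = {W_k} for all k ∈ {1,...,ℓ}. -/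
open Finset
open scoped Classical

variable {C : Type} [Fintype C] [DecidableEq C]

/-- If `g` is a consistent generator function of `f`, and `W 1 ⊆ ... ⊆ W ℓ` is a sequence of
committees with `|W k| = k` such that `f(A,k) = {W k}`, `W k ∈ f(A',k)`, and
`W k \ W (k-1) ⊆ g(A', W (k-1))` for all `k ∈ {1,...,ℓ}`, then `f(A+A',k) = {W k}` for all
`k ∈ {1,...,ℓ}`. -/
theorem merge_lemma (f : Profile C → ℕ → Finset (Finset C))
    (g : Profile C → Finset C → Finset C)
    (hf : IsABCRule f) (hg : IsGenerator g) (hgen : Generates g f)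
    (hcons : ConsistentGen g)
    (A A' : Profile C) (hd : A.Disj A')
    (ℓ : ℕ) (hℓ : ℓ ≤ Fintype.card C)
    (W : ℕ → Finset C) (hW0 : W 0 = ∅)
    (hWc : ∀ k, 1 ≤ k → k ≤ ℓ → (W k).card = k ∧ W (k-1) ⊆ W k)
    (hA : ∀ k, 1 ≤ k → k ≤ ℓ → f A k = {W k})
    (hA' : ∀ k, 1 ≤ k → k ≤ ℓ → W k ∈ f A' k ∧ (W k \ W (k-1)) ⊆ g A' (W (k-1))) :
    ∀ k, 1 ≤ k → k ≤ ℓ → f (A.combine A') k = {W k} := by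

  suffices h : ∀ k, k ≤ ℓ → f (A.combine A') k = {W k} by
    intro k _ hk; exact h k hk
  intro k
  induction k with
  | zero =>
    intro _
    rw [hW0]; exact hf.1 _
  | succ k IH =>
    intro hkℓ
    have hkc : k + 1 ≤ Fintype.card C := le_trans hkℓ hℓ
    have hWk : (W k).card = k := by
      rcases Nat.eq_zero_or_pos k with h0 | h0
      · simp [h0, hW0]
      · exact (hWc k h0 (by omega)).1
    -- f A k = {W k}
    have fAk : f A k = {W k} := by
      rcases Nat.eq_zero_or_pos k with h0 | h0
      · rw [h0, hW0]; exact hf.1 _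
      · exact hA k h0 (by omega)
    have hgenA := hgen A (k+1) (by omega) hkc
    have hgenC := hgen (A.combine A') (k+1) (by omega) hkc
    simp only [Nat.add_sub_cancel] at hgenA hgenC
    have fAk1 : f A (k+1) = {W (k+1)} := hA (k+1) (by omega) hkℓ
    -- every x in g A (W k) gives insert x (W k) = W (k+1)
    have hins : ∀ x ∈ g A (W k), insert x (W k) = W (k+1) := by
      intro x hx
      have : insert x (W k) ∈ f A (k+1) := by
        rw [hgenA.2, fAk]
        simp only [singleton_biUnion, mem_image]
        exact ⟨x, hx, rfl⟩
      rw [fAk1, mem_singleton] at this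
      exact this
    -- the unique new element x
    have hWc1 := hWc (k+1) (by omega) hkℓ
    simp only [Nat.add_sub_cancel] at hWc1
    obtain ⟨hcard1, hsub1⟩ := hWc1
    have hsd : (W (k+1) \ W k).card = 1 := by
      rw [card_sdiff_of_subset hsub1, hcard1, hWk]; omega
    obtain ⟨x, hx⟩ := card_eq_one.mp hsd
    have hxA' : x ∈ g A' (W k) := by
      have := (hA' (k+1) (by omega) hkℓ).2
      simp only [Nat.add_sub_cancel] at this
      exact this (by rw [hx]; exact mem_singleton_self x)
    have hxA : x ∈ g A (W k) := by
      have hW1 : W (k+1) ∈ f A (k+1) := by rw [fAk1]; exact mem_singleton_self _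
      rw [hgenA.2, fAk] at hW1
      simp only [singleton_biUnion, mem_image] at hW1
      obtain ⟨y, hy, hyins⟩ := hW1
      have hyW : y ∉ W k := by
        have := hg A (W k) hy
        simp only [mem_sdiff] at this
        exact this.2
      have : y ∈ W (k+1) \ W k := by
        rw [mem_sdiff]
        exact ⟨by rw [← hyins]; exact mem_insert_self _ _, hyW⟩
      rw [hx, mem_singleton] at this
      rwa [← this]
    -- W k ≠ univ
    have hWne : W k ≠ univ := by
      intro h
      have : (W k).card = Fintype.card C := by rw [h, card_univ]
      omega
    have hCk : f (A.combine A') k = {W k} := IH (by omega)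
    have hCne : (g (A.combine A') (W k)).Nonempty :=
      hgenC.1 (W k) (by rw [hCk]; exact mem_singleton_self _)
    have hconseq := hcons A A' (W k) hd hWne ⟨x, mem_inter.mpr ⟨hxA, hxA'⟩⟩ hCne
    rw [hgenC.2, hCk]
    simp only [singleton_biUnion]
    apply Finset.ext
    intro V
    simp only [mem_image, mem_singleton]
    constructor
    · rintro ⟨z, hz, rfl⟩
      rw [hconseq, mem_inter] at hz
      exact hins z hz.1
    · rintro rfl
      refine ⟨x, ?_, hins x hxA⟩
      rw [hconseq]
      exact mem_inter.mpr ⟨hxA, hxA'⟩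
end

section
/- Let f be a proper, consistently committee-monotone ABC voting rule. For all profiles A, A' and every ℓ ∈ {1,...,m} such that |f(A,k)| = 1 for all k ∈ {1,...,ℓ}, there exists a positive integer j such that f(jA + A', k) = f(A,k) for all k ∈ {1,...,ℓ}. -/
open Finset
open scoped Classical

variable {C : Type} [Fintype C] [DecidableEq C]

/-- `B` is a relabeled (disjoint-renaming) copy of the profile `A`. -/
def IsCopy (A B : Profile C) : Prop :=
  ∃ e : ℕ ↪ ℕ, B.voters = A.voters.map e ∧ ∀ i ∈ A.voters, B.ballot (e i) = A.ballot i

/-- `B` consists of `j` pairwise disjoint copies of the profile `A`. -/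
def IsNCopies (j : ℕ) (A B : Profile C) : Prop :=
  ∃ P : Fin j → Profile C,
    (∀ t, IsCopy A (P t)) ∧
    (∀ s t, s ≠ t → Disjoint (P s).voters (P t).voters) ∧
    B.voters = Finset.univ.biUnion (fun t => (P t).voters) ∧
    ∀ t, ∀ i ∈ (P t).voters, B.ballot i = (P t).ballot i

def Anonymous (f : Profile C → ℕ → Finset (Finset C)) : Prop :=
  ∀ A (π : Equiv.Perm ℕ) k, f (Profile.permVoters π A) k = f A k

def Neutral (f : Profile C → ℕ → Finset (Finset C)) : Prop :=
  ∀ A (τ : Equiv.Perm C) k, f (Profile.mapCand τ A) k = (f A k).image fun W => W.image τ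

def ContinuousRule (f : Profile C → ℕ → Finset (Finset C)) : Prop :=
  ∀ A A' k, Profile.Disj A A' → (f A k).card = 1 →
    ∃ j, 0 < j ∧ ∀ B, IsNCopies j A B → Profile.Disj B A' → f (B.combine A') k = f A k

def NonImposing (f : Profile C → ℕ → Finset (Finset C)) : Prop :=
  ∀ W : Finset C, ∃ A, f A W.card = {W}

def ProperRule (f : Profile C → ℕ → Finset (Finset C)) : Prop :=
  IsABCRule f ∧ Anonymous f ∧ Neutral f ∧ ContinuousRule f ∧ NonImposing f

def ConsistentlyCommitteeMonotone (f : Profile C → ℕ → Finset (Finset C)) : Prop :=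
  ∃ g, IsGenerator g ∧ ConsistentGen g ∧ Generates g f

namespace SeqContAux

theorem Profile.ext' {C : Type} {P Q : Profile C} (h1 : P.voters = Q.voters)
    (h2 : P.ballot = Q.ballot) : P = Q := by
  cases P; cases Q; simp_all

theorem exists_perm_extend (S : Finset ℕ) (u : ℕ → ℕ) (hu : Set.InjOn u S) :
    ∃ π : Equiv.Perm ℕ, ∀ i ∈ S, π i = u i := by
  classical
  induction S using Finset.induction_on with
  | empty => exact ⟨1, by simp⟩
  | @insert a s ha ih =>
    obtain ⟨π', hπ'⟩ := ih (hu.mono (by simp [Finset.coe_subset, Finset.subset_insert]))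
    set c := π'.symm (u a) with hc
    refine ⟨π' * Equiv.swap a c, ?_⟩
    intro i hi
    rcases Finset.mem_insert.mp hi with rfl | his
    · simp [Equiv.Perm.mul_apply, hc]
    · have hia : i ≠ a := by rintro rfl; exact ha his
      have hic : i ≠ c := by
        intro h
        apply hia
        apply hu (by simp [his]) (by simp)
        have h1 : π' i = u i := hπ' i his
        have h2 : π' c = u a := by simp [hc]
        rw [← h1, h, h2]
      simp [Equiv.Perm.mul_apply, Equiv.swap_apply_of_ne_of_ne hia hic, hπ' i his]

end SeqContAux
namespace SeqContAux2
set_option linter.unusedSectionVars false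
open Profile

variable {C : Type} [Fintype C] [DecidableEq C]

theorem combine_voters (X Y : Profile C) : (X.combine Y).voters = X.voters ∪ Y.voters := rfl

theorem combine_ballot (X Y : Profile C) (i : ℕ) :
    (X.combine Y).ballot i = if i ∈ X.voters then X.ballot i else Y.ballot i := rfl

theorem combine_mk_same (S T : Finset ℕ) (b : ℕ → Finset C) :
    (Profile.mk S b).combine (Profile.mk T b) = ⟨S ∪ T, b⟩ := by
  apply SeqContAux.Profile.ext'
  · rfl
  · funext i
    simp [Profile.combine]

theorem mem_permVoters (π : Equiv.Perm ℕ) (X : Profile C) (i : ℕ) :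
    i ∈ (Profile.permVoters π X).voters ↔ π.symm i ∈ X.voters := by
  simp [Profile.permVoters, Finset.mem_map_equiv]

theorem isCopy_of_agree {X P Q : Profile C} (h : IsCopy X P) (hv : Q.voters = P.voters)
    (hb : ∀ i ∈ P.voters, Q.ballot i = P.ballot i) : IsCopy X Q := by
  obtain ⟨e, he1, he2⟩ := h
  refine ⟨e, by rw [hv, he1], fun i hi => ?_⟩
  rw [hb _ (by rw [he1]; exact Finset.mem_map_of_mem e hi), he2 i hi]

theorem isCopy_permVoters (π : Equiv.Perm ℕ) {X Z : Profile C} (h : IsCopy X Z) :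
    IsCopy (Profile.permVoters π X) Z := by
  obtain ⟨e, he1, he2⟩ := h
  refine ⟨π.symm.toEmbedding.trans e, ?_, ?_⟩
  · rw [he1]
    show _ = (X.voters.map π.toEmbedding).map _
    rw [Finset.map_map]
    ext x
    simp [Finset.mem_map]
  · intro i hi
    rw [mem_permVoters] at hi
    show Z.ballot (e (π.symm i)) = X.ballot (π.symm i)
    exact he2 _ hi

theorem combineCopy {X Y X' Y' : Profile C} (hX : IsCopy X X') (hY : IsCopy Y Y')
    (hd : Disjoint X.voters Y.voters) (hd' : Disjoint X'.voters Y'.voters) :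
    IsCopy (X.combine Y) (X'.combine Y') := by
  obtain ⟨e₁, hv₁, hb₁⟩ := hX
  obtain ⟨e₂, hv₂, hb₂⟩ := hY
  set u : ℕ → ℕ := fun i => if i ∈ X.voters then e₁ i else e₂ i with hu
  have hinj : Set.InjOn u ↑(X.voters ∪ Y.voters) := by
    intro a ha b hb hab
    simp only [Finset.coe_union, Set.mem_union, Finset.mem_coe] at ha hb
    have him1 : ∀ x ∈ X.voters, u x ∈ X'.voters := fun x hx => by
      rw [hv₁]; simp only [hu, if_pos hx]; exact Finset.mem_map_of_mem e₁ hx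
    have him2 : ∀ x, x ∉ X.voters → x ∈ Y.voters → u x ∈ Y'.voters := fun x hx hy => by
      rw [hv₂]; simp only [hu, if_neg hx]; exact Finset.mem_map_of_mem e₂ hy
    by_cases haX : a ∈ X.voters <;> by_cases hbX : b ∈ X.voters
    · apply e₁.injective; simpa [hu, haX, hbX] using hab
    · have hbY : b ∈ Y.voters := hb.resolve_left hbX
      exact absurd (hab ▸ him1 a haX) (fun hh => (Finset.disjoint_left.mp hd') hh (him2 b hbX hbY))
    · have haY : a ∈ Y.voters := ha.resolve_left haX
      exact absurd (hab ▸ him2 a haX haY) (fun hh => (Finset.disjoint_right.mp hd') hh (him1 b hbX))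
    · have haY : a ∈ Y.voters := ha.resolve_left haX
      have hbY : b ∈ Y.voters := hb.resolve_left hbX
      apply e₂.injective; simpa [hu, haX, hbX] using hab
  obtain ⟨π, hπ⟩ := SeqContAux.exists_perm_extend _ u hinj
  have hπ1 : ∀ i ∈ X.voters, π i = e₁ i := fun i hi => by
    rw [hπ i (Finset.mem_union_left _ hi)]; simp [hu, hi]
  have hπ2 : ∀ i, i ∉ X.voters → i ∈ Y.voters → π i = e₂ i := fun i hx hy => by
    rw [hπ i (Finset.mem_union_right _ hy)]; simp [hu, hx]
  have h1 : X.voters.map π.toEmbedding = X'.voters := by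
    rw [hv₁]; ext x
    simp only [Finset.mem_map, Equiv.coe_toEmbedding]
    constructor
    · rintro ⟨a, ha, rfl⟩; exact ⟨a, ha, (hπ1 a ha).symm⟩
    · rintro ⟨a, ha, rfl⟩; exact ⟨a, ha, hπ1 a ha⟩
  have h2 : Y.voters.map π.toEmbedding = Y'.voters := by
    rw [hv₂]; ext x
    simp only [Finset.mem_map, Equiv.coe_toEmbedding]
    constructor
    · rintro ⟨a, ha, rfl⟩
      exact ⟨a, ha, (hπ2 a (fun hx => (Finset.disjoint_left.mp hd) hx ha) ha).symm⟩
    · rintro ⟨a, ha, rfl⟩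
      exact ⟨a, ha, hπ2 a (fun hx => (Finset.disjoint_left.mp hd) hx ha) ha⟩
  refine ⟨π.toEmbedding, ?_, ?_⟩
  · show X'.voters ∪ Y'.voters = (X.voters ∪ Y.voters).map _
    rw [Finset.map_union, h1, h2]
  · intro i hi
    rcases Finset.mem_union.mp hi with hiX | hiY
    · have : π i ∈ X'.voters := by rw [← h1]; exact Finset.mem_map_of_mem _ hiX
      show (X'.combine Y').ballot (π i) = _
      rw [combine_ballot, if_pos this, combine_ballot, if_pos hiX, hπ1 i hiX, hb₁ i hiX]
    · by_cases hiX : i ∈ X.voters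
      · have : π i ∈ X'.voters := by rw [← h1]; exact Finset.mem_map_of_mem _ hiX
        show (X'.combine Y').ballot (π i) = _
        rw [combine_ballot, if_pos this, combine_ballot, if_pos hiX, hπ1 i hiX, hb₁ i hiX]
      · have hY' : π i ∈ Y'.voters := by rw [← h2]; exact Finset.mem_map_of_mem _ hiY
        have hX' : π i ∉ X'.voters := fun hh => (Finset.disjoint_left.mp hd') hh hY'
        show (X'.combine Y').ballot (π i) = _
        rw [combine_ballot, if_neg hX', combine_ballot, if_neg hiX, hπ2 i hiX hiY, hb₂ i hiY]

end SeqContAux2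
namespace SeqContAux3
set_option linter.unusedSectionVars false

variable {C : Type} [Fintype C] [DecidableEq C]
variable {f : Profile C → ℕ → Finset (Finset C)} {g : Profile C → Finset C → Finset C}
variable {W : ℕ → Finset C}

theorem sing (habc : IsABCRule f) (hgen : Generates g f) (hg : IsGenerator g)
    {X : Profile C} {k : ℕ} (hk : k + 1 ≤ Fintype.card C)
    (h0 : f X k = {W k}) (h1 : f X (k+1) = {W (k+1)}) :
    ∃ x, g X (W k) = {x} ∧ W (k+1) = insert x (W k) ∧ x ∉ W k := by
  obtain ⟨hne, heq⟩ := hgen X (k+1) (by omega) hk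
  simp only [Nat.add_sub_cancel] at hne heq
  rw [h0, Finset.singleton_biUnion] at heq
  obtain ⟨x, hx⟩ := hne (W k) (by rw [h0]; exact Finset.mem_singleton_self _)
  have hxW : x ∉ W k := by
    have := hg X (W k) hx; simp only [Finset.mem_sdiff] at this; exact this.2
  have hins : insert x (W k) = W (k+1) := by
    have h' : insert x (W k) ∈ f X (k+1) := by rw [heq]; exact Finset.mem_image_of_mem _ hx
    rw [h1] at h'; exact Finset.mem_singleton.mp h'
  refine ⟨x, ?_, hins.symm, hxW⟩
  apply Finset.eq_singleton_iff_unique_mem.mpr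
  refine ⟨hx, fun y hy => ?_⟩
  have hyW : y ∉ W k := by
    have := hg X (W k) hy; simp only [Finset.mem_sdiff] at this; exact this.2
  have h2 : insert y (W k) = insert x (W k) := by
    have h' : insert y (W k) ∈ f X (k+1) := by rw [heq]; exact Finset.mem_image_of_mem _ hy
    rw [h1] at h'; rw [Finset.mem_singleton.mp h', hins]
  have h3 : y ∈ insert x (W k) := h2 ▸ Finset.mem_insert_self y (W k)
  rcases Finset.mem_insert.mp h3 with h | h
  · exact h
  · exact absurd h hyW

theorem pin (habc : IsABCRule f) (hgen : Generates g f) (hg : IsGenerator g)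
    {c : ℕ → C} {L : ℕ}
    (hcW : ∀ k', k' + 1 ≤ L → W (k'+1) = insert (c (k'+1)) (W k') ∧ c (k'+1) ∉ W k')
    (hL : L ≤ Fintype.card C)
    {X : Profile C} (hch : ∀ k' ≤ L, f X k' = {W k'}) :
    ∀ k', k' + 1 ≤ L → g X (W k') = {c (k'+1)} := by
  intro k' hk'
  obtain ⟨x, hgx, hWx, hxW⟩ := sing habc hgen hg (by omega)
    (hch k' (by omega)) (hch (k'+1) hk')
  obtain ⟨hWc, hcW'⟩ := hcW k' hk'
  have hx : x = c (k'+1) := by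
    have h2 : insert x (W k') = insert (c (k'+1)) (W k') := by rw [← hWx, ← hWc]
    have h3 : x ∈ insert (c (k'+1)) (W k') := h2 ▸ Finset.mem_insert_self _ _
    rcases Finset.mem_insert.mp h3 with h | h
    · exact h
    · exact absurd h hxW
  rw [hgx, hx]

theorem step (habc : IsABCRule f) (hgen : Generates g f) (hg : IsGenerator g)
    (hcons : ConsistentGen g) {c : ℕ → C} {L : ℕ} (hL : L ≤ Fintype.card C)
    (hWcard : ∀ k ≤ L, (W k).card = k)
    (hWc : ∀ k', k' + 1 ≤ L → W (k'+1) = insert (c (k'+1)) (W k'))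
    (hW0 : W 0 = ∅)
    {U V : Profile C} (hUV : U.Disj V)
    (pU : ∀ k', k' + 1 ≤ L → g U (W k') = {c (k'+1)})
    (pV : ∀ k', k' + 1 ≤ L → g V (W k') = {c (k'+1)}) :
    ∀ k ≤ L, f (U.combine V) k = {W k} := by
  intro k
  induction k with
  | zero => intro _; rw [habc.1, hW0]
  | succ k ih =>
    intro hk
    obtain ⟨hne, heq⟩ := hgen (U.combine V) (k+1) (by omega) (by omega)
    simp only [Nat.add_sub_cancel] at hne heq
    rw [ih (by omega), Finset.singleton_biUnion] at heq
    have hgne : (g (U.combine V) (W k)).Nonempty :=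
      hne (W k) (by rw [ih (by omega)]; exact Finset.mem_singleton_self _)
    have hWuniv : W k ≠ univ := by
      intro h
      have h1 : (W k).card = k := hWcard k (by omega)
      rw [h, Finset.card_univ] at h1
      omega
    have hcc : g (U.combine V) (W k) = {c (k+1)} := by
      rw [hcons U V (W k) hUV hWuniv (by rw [pU k hk, pV k hk]; simp) hgne,
        pU k hk, pV k hk]
      simp
    rw [heq, hcc, Finset.image_singleton, ← hWc k hk]

end SeqContAux3
namespace SeqContAux4
set_option linter.unusedSectionVars false
open SeqContAux2 SeqContAux3

variable {C : Type} [Fintype C] [DecidableEq C]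

def chainProf (A : Profile C) (π : ℕ → Equiv.Perm ℕ) : ℕ → Profile C
  | 0 => Profile.permVoters (π 0) A
  | (i+1) => (Profile.permVoters (π (i+1)) A).combine (chainProf A π i)

theorem chainProf_voters (A : Profile C) (π : ℕ → Equiv.Perm ℕ) (i : ℕ) :
    (chainProf A π i).voters
      = (Finset.range (i+1)).biUnion (fun s => A.voters.map (π s).toEmbedding) := by
  induction i with
  | zero => simp [chainProf, Profile.permVoters]
  | succ i ih =>
    show (Profile.permVoters (π (i+1)) A).voters ∪ _ = _
    rw [Finset.range_add_one, Finset.biUnion_insert, ← ih]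
    rfl

theorem chainProf_chain {f : Profile C → ℕ → Finset (Finset C)}
    {g : Profile C → Finset C → Finset C}
    (habc : IsABCRule f) (hgen : Generates g f) (hg : IsGenerator g)
    (hcons : ConsistentGen g) (hanon : Anonymous f)
    {A : Profile C} {W : ℕ → Finset C} {c : ℕ → C} {L : ℕ}
    (hL : L ≤ Fintype.card C)
    (hW : ∀ k ≤ L, f A k = {W k})
    (hWcard : ∀ k ≤ L, (W k).card = k)
    (hWc : ∀ k', k' + 1 ≤ L → W (k'+1) = insert (c (k'+1)) (W k') ∧ c (k'+1) ∉ W k')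
    (hW0 : W 0 = ∅)
    (π : ℕ → Equiv.Perm ℕ)
    (hblocks : ∀ s t, s ≠ t →
      Disjoint (A.voters.map (π s).toEmbedding) (A.voters.map (π t).toEmbedding)) :
    ∀ i, ∀ k ≤ L, f (chainProf A π i) k = {W k} := by
  intro i
  induction i with
  | zero => intro k hk; rw [show chainProf A π 0 = Profile.permVoters (π 0) A from rfl,
      hanon A (π 0) k]; exact hW k hk
  | succ i ih =>
    have hchU : ∀ k ≤ L, f (Profile.permVoters (π (i+1)) A) k = {W k} := by
      intro k hk; rw [hanon A (π (i+1)) k]; exact hW k hk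
    have hdisj : (Profile.permVoters (π (i+1)) A).Disj (chainProf A π i) := by
      show Disjoint _ _
      rw [chainProf_voters]
      show Disjoint (A.voters.map (π (i+1)).toEmbedding) _
      apply Finset.disjoint_biUnion_right _ _ _ |>.mpr
      intro s hs
      exact hblocks (i+1) s (by simp only [Finset.mem_range] at hs; omega)
    exact step habc hgen hg hcons hL hWcard (fun k' h => (hWc k' h).1) hW0 hdisj
      (pin habc hgen hg hWc hL hchU) (pin habc hgen hg hWc hL ih)

theorem decomp {A A' B : Profile C} {n : ℕ} (hB : IsNCopies (n+1) A B) (hd : B.Disj A') :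
    ∃ (π : Equiv.Perm ℕ) (B' : Profile C),
      IsNCopies n A B' ∧ B'.Disj A' ∧
      (Profile.permVoters π A).Disj (B'.combine A') ∧
      B.combine A' = (Profile.permVoters π A).combine (B'.combine A') := by
  obtain ⟨P, hcopy, hpd, hvot, hbal⟩ := hB
  obtain ⟨e₀, hv₀, hb₀⟩ := hcopy 0
  obtain ⟨π, hπ⟩ := SeqContAux.exists_perm_extend A.voters e₀ (e₀.injective.injOn)
  set X := B.combine A' with hX
  set B' : Profile C := ⟨B.voters \ (P 0).voters, X.ballot⟩ with hB'
  have hP0B : (P 0).voters ⊆ B.voters := by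
    rw [hvot]; intro x hx; exact Finset.mem_biUnion.mpr ⟨0, Finset.mem_univ _, hx⟩
  have hCv : (Profile.permVoters π A).voters = (P 0).voters := by
    show A.voters.map π.toEmbedding = _
    rw [hv₀]
    ext x
    simp only [Finset.mem_map, Equiv.coe_toEmbedding]
    constructor
    · rintro ⟨a, ha, rfl⟩; exact ⟨a, ha, (hπ a ha).symm⟩
    · rintro ⟨a, ha, rfl⟩; exact ⟨a, ha, hπ a ha⟩
  have hCb : ∀ i ∈ (Profile.permVoters π A).voters,
      (Profile.permVoters π A).ballot i = X.ballot i := by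
    intro i hi
    have hi' : i ∈ A.voters.map π.toEmbedding := hi
    simp only [Finset.mem_map, Equiv.coe_toEmbedding] at hi'
    obtain ⟨a, ha, rfl⟩ := hi'
    have h1 : (Profile.permVoters π A).ballot (π a) = A.ballot a := by
      show A.ballot (π.symm (π a)) = _
      rw [Equiv.symm_apply_apply]
    have hmem : π a ∈ (P 0).voters := by rw [← hCv]; exact Finset.mem_map_of_mem _ ha
    have h2 : X.ballot (π a) = A.ballot a := by
      rw [hX, combine_ballot, if_pos (hP0B hmem), hbal 0 _ hmem, hπ a ha, hb₀ a ha]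
    rw [h1, h2]
  refine ⟨π, B', ?_, ?_, ?_, ?_⟩
  · -- IsNCopies n A B'
    refine ⟨fun t => P t.succ, fun t => hcopy t.succ,
      fun s t hst => hpd _ _ (fun h => hst (Fin.succ_injective _ h)), ?_, ?_⟩
    · show B.voters \ (P 0).voters = _
      ext x
      simp only [Finset.mem_sdiff, hvot, Finset.mem_biUnion, Finset.mem_univ, true_and]
      constructor
      · rintro ⟨⟨t, ht⟩, h0⟩
        have ht0 : t ≠ 0 := by rintro rfl; exact h0 ht
        obtain ⟨t', rfl⟩ := Fin.exists_succ_eq.mpr ht0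
        exact ⟨t', ht⟩
      · rintro ⟨t', ht'⟩
        refine ⟨⟨t'.succ, ht'⟩, fun h0 => ?_⟩
        exact (Finset.disjoint_left.mp (hpd _ _ (Fin.succ_ne_zero t'))) ht' h0
    · intro t i hi
      have hiB : i ∈ B.voters := by
        rw [hvot]; exact Finset.mem_biUnion.mpr ⟨t.succ, Finset.mem_univ _, hi⟩
      show X.ballot i = _
      rw [hX, combine_ballot, if_pos hiB]
      exact hbal t.succ i hi
  · -- B'.Disj A'
    show Disjoint (B.voters \ (P 0).voters) A'.voters
    exact Finset.disjoint_of_subset_left (Finset.sdiff_subset) hd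
  · -- Disj C (B'.combine A')
    show Disjoint _ ((B.voters \ (P 0).voters) ∪ A'.voters)
    rw [hCv, Finset.disjoint_union_right]
    exact ⟨Finset.disjoint_sdiff, Finset.disjoint_of_subset_left hP0B hd⟩
  · -- the profile identity
    have hkey : ∀ i, ((Profile.permVoters π A).combine (B'.combine A')).ballot i
        = X.ballot i := by
      intro i
      rw [combine_ballot, combine_ballot]
      by_cases hiC : i ∈ (Profile.permVoters π A).voters
      · rw [if_pos hiC, hCb i hiC]
      · rw [if_neg hiC]
        by_cases hiB' : i ∈ B'.voters
        · rw [if_pos hiB', hB']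
        · rw [if_neg hiB']
          have hiB : i ∉ B.voters := by
            intro h
            by_cases hP0 : i ∈ (P 0).voters
            · exact hiC (by rw [hCv]; exact hP0)
            · apply hiB'
              rw [hB']
              exact Finset.mem_sdiff.mpr ⟨h, hP0⟩
          rw [hX, combine_ballot, if_neg hiB]
    apply SeqContAux.Profile.ext'
    · show B.voters ∪ A'.voters = _ ∪ ((B.voters \ (P 0).voters) ∪ A'.voters)
      rw [hCv, ← Finset.union_assoc, Finset.union_sdiff_of_subset hP0B]
    · funext i
      exact (hkey i).symm

end SeqContAux4
namespace SeqContAux5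
set_option linter.unusedSectionVars false
set_option linter.unusedVariables false
open SeqContAux2 SeqContAux4

variable {C : Type} [Fintype C] [DecidableEq C]

theorem regroup {A B : Profile C} {r j : ℕ} (hj : 0 < j)
    (π : ℕ → Equiv.Perm ℕ)
    (hblocks : ∀ s t, s ≠ t →
      Disjoint (A.voters.map (π s).toEmbedding) (A.voters.map (π t).toEmbedding))
    (hB : IsNCopies ((r+1) * j) A B) :
    IsNCopies j (chainProf A π r) B := by
  obtain ⟨P, hcopy, hpd, hvot, hbal⟩ := hB
  have hn0 : 0 < (r+1)*j := by positivity
  have hbound : ∀ s t, s ≤ r → t < j → s*j + t < (r+1)*j := by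
    intro s t hs ht
    have h1 : (s+1)*j ≤ (r+1)*j := Nat.mul_le_mul_right j (by omega)
    have h2 : s*j + t < (s+1)*j := by rw [Nat.succ_mul]; omega
    omega
  set Pp : ℕ → Profile C := fun m => P ⟨m % ((r+1)*j), Nat.mod_lt _ hn0⟩ with hPpdef
  have hPp : ∀ m (hm : m < (r+1)*j), Pp m = P ⟨m, hm⟩ := by
    intro m hm
    simp only [hPpdef]
    congr 1
    exact Fin.ext (Nat.mod_eq_of_lt hm)
  have hPcopy : ∀ m, m < (r+1)*j → IsCopy A (Pp m) := by
    intro m hm; rw [hPp m hm]; exact hcopy _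
  have hPd' : ∀ a b, a < (r+1)*j → b < (r+1)*j → a ≠ b → Disjoint (Pp a).voters (Pp b).voters := by
    intro a b ha hb hab
    rw [hPp a ha, hPp b hb]
    exact hpd _ _ (fun h => hab (congrArg Fin.val h))
  have hPbal : ∀ m, m < (r+1)*j → ∀ i ∈ (Pp m).voters, B.ballot i = (Pp m).ballot i := by
    intro m hm
    rw [hPp m hm]
    exact hbal _
  have hPsub : ∀ m, m < (r+1)*j → (Pp m).voters ⊆ B.voters := by
    intro m hm x hx
    rw [hvot]
    rw [hPp m hm] at hx
    exact Finset.mem_biUnion.mpr ⟨_, Finset.mem_univ _, hx⟩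
  -- the copy claim
  have key : ∀ t, t < j → ∀ r', r' ≤ r →
      IsCopy (chainProf A π r')
        ⟨(Finset.range (r'+1)).biUnion (fun s => (Pp (s*j + t)).voters), B.ballot⟩ := by
    intro t ht r'
    induction r' with
    | zero =>
      intro _
      have hv : (Finset.range 1).biUnion (fun s => (Pp (s*j + t)).voters)
          = (Pp t).voters := by
        simp
      rw [hv]
      have h0 : IsCopy (chainProf A π 0) (Pp t) :=
        isCopy_permVoters (π 0) (hPcopy t (by have := hbound 0 t (by omega) ht; omega))
      exact isCopy_of_agree h0 rfl
        (fun i hi => hPbal t (by have := hbound 0 t (by omega) ht; omega) i hi)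
    | succ r'' ih =>
      intro hr'
      have hvv : (Finset.range (r''+2)).biUnion (fun s => (Pp (s*j + t)).voters)
          = (Pp ((r''+1)*j + t)).voters
            ∪ (Finset.range (r''+1)).biUnion (fun s => (Pp (s*j + t)).voters) := by
        rw [Finset.range_add_one, Finset.biUnion_insert]
      rw [hvv, ← combine_mk_same]
      show IsCopy ((Profile.permVoters (π (r''+1)) A).combine (chainProf A π r'')) _
      have hX : IsCopy (Profile.permVoters (π (r''+1)) A)
          (⟨(Pp ((r''+1)*j + t)).voters, B.ballot⟩ : Profile C) := by
        have hb' : (r''+1)*j + t < (r+1)*j := hbound (r''+1) t (by omega) ht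
        have h0 : IsCopy (Profile.permVoters (π (r''+1)) A) (Pp ((r''+1)*j + t)) :=
          isCopy_permVoters _ (hPcopy _ hb')
        exact isCopy_of_agree h0 rfl (fun i hi => hPbal _ hb' i hi)
      have hY := ih (by omega)
      have hd : Disjoint (Profile.permVoters (π (r''+1)) A).voters
          (chainProf A π r'').voters := by
        rw [chainProf_voters]
        show Disjoint (A.voters.map (π (r''+1)).toEmbedding) _
        apply Finset.disjoint_biUnion_right _ _ _ |>.mpr
        intro s hs
        exact hblocks (r''+1) s (by simp only [Finset.mem_range] at hs; omega)
      have hd' : Disjoint (Pp ((r''+1)*j + t)).voters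
          ((Finset.range (r''+1)).biUnion (fun s => (Pp (s*j + t)).voters)) := by
        apply Finset.disjoint_biUnion_right _ _ _ |>.mpr
        intro s hs
        simp only [Finset.mem_range] at hs
        apply hPd'
        · exact hbound (r''+1) t (by omega) ht
        · exact hbound s t (by omega) ht
        · have h1 : s*j < (r''+1)*j := Nat.mul_lt_mul_of_lt_of_le hs (le_refl j) hj
          omega
      exact combineCopy hX hY hd hd'
  -- assemble IsNCopies
  refine ⟨fun t => ⟨(Finset.range (r+1)).biUnion (fun s => (Pp (s*j + t.1)).voters), B.ballot⟩,
    fun t => key t.1 t.2 r (le_refl r), ?_, ?_, ?_⟩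
  · -- pairwise disjoint
    intro s t hst
    show Disjoint ((Finset.range (r+1)).biUnion _) ((Finset.range (r+1)).biUnion _)
    apply Finset.disjoint_biUnion_left _ _ _ |>.mpr
    intro a ha
    apply Finset.disjoint_biUnion_right _ _ _ |>.mpr
    intro b hb
    simp only [Finset.mem_range] at ha hb
    apply hPd'
    · exact hbound a s.1 (by omega) s.2
    · exact hbound b t.1 (by omega) t.2
    · intro heq
      apply hst
      have e1 : (a*j + s.1) % j = s.1 := by
        rw [Nat.add_comm, Nat.add_mul_mod_self_right, Nat.mod_eq_of_lt s.2]
      have e2 : (b*j + t.1) % j = t.1 := by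
        rw [Nat.add_comm, Nat.add_mul_mod_self_right, Nat.mod_eq_of_lt t.2]
      apply Fin.ext
      rw [← e1, ← e2, heq]
  · -- voters
    ext x
    simp only [Finset.mem_biUnion, Finset.mem_univ, true_and, Finset.mem_range]
    constructor
    · intro hx
      rw [hvot] at hx
      simp only [Finset.mem_biUnion, Finset.mem_univ, true_and] at hx
      obtain ⟨i, hi⟩ := hx
      refine ⟨⟨i.1 % j, Nat.mod_lt _ hj⟩, i.1 / j, ?_, ?_⟩
      · exact (Nat.div_lt_iff_lt_mul hj).mpr i.2
      · have : i.1 / j * j + i.1 % j = i.1 := by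
          rw [Nat.mul_comm]
          exact Nat.div_add_mod i.1 j
        rw [hPp _ (by rw [this]; exact i.2)]
        convert hi using 3
        exact Fin.ext this
    · rintro ⟨t, s, hs, hx⟩
      exact hPsub _ (hbound s t.1 (by omega) t.2) hx
  · -- ballots
    intro t i hi
    rfl

end SeqContAux5
/-- Strengthened continuity for proper consistently committee monotone ABC voting rules:
a sufficiently large majority can enforce the outcome for all committee sizes up to `ℓ` at
once. -/
theorem seq_continuity (f : Profile C → ℕ → Finset (Finset C))
    (hp : ProperRule f) (hc : ConsistentlyCommitteeMonotone f)
    (A A' : Profile C) (ℓ : ℕ) (h1 : 1 ≤ ℓ) (h2 : ℓ ≤ Fintype.card C)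
    (hu : ∀ k, 1 ≤ k → k ≤ ℓ → (f A k).card = 1) :
    ∃ j, 0 < j ∧ ∀ B : Profile C, IsNCopies j A B → B.Disj A' →
      ∀ k, 1 ≤ k → k ≤ ℓ → f (B.combine A') k = f A k := by
  classical
  obtain ⟨habc, hanon, hneu, hcont, himp⟩ := hp
  obtain ⟨g, hg, hcons, hgen⟩ := hc
  have hCne : Nonempty C := Fintype.card_pos_iff.mp (by omega)
  -- the unique winning chain of `A`
  have hWex : ∀ k, k ≤ ℓ → ∃ w, f A k = {w} := by
    intro k hk
    rcases Nat.eq_zero_or_pos k with rfl | hk1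
    · exact ⟨∅, habc.1 A⟩
    · exact Finset.card_eq_one.mp (hu k hk1 hk)
  set W : ℕ → Finset C := fun k => if h : k ≤ ℓ then (hWex k h).choose else ∅ with hWdef
  have hW : ∀ k, k ≤ ℓ → f A k = {W k} := by
    intro k hk
    simp only [hWdef, dif_pos hk]
    exact (hWex k hk).choose_spec
  have hW0 : W 0 = ∅ := by
    have h' := hW 0 (by omega)
    rw [habc.1 A] at h'
    exact (Finset.singleton_injective h'.symm)
  have hWcard : ∀ k, k ≤ ℓ → (W k).card = k := by
    intro k hk
    exact habc.2.2 A k (W k) (by rw [hW k hk]; exact Finset.mem_singleton_self _)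
  have cex : ∀ k', k' + 1 ≤ ℓ →
      ∃ x, g A (W k') = {x} ∧ W (k'+1) = insert x (W k') ∧ x ∉ W k' := by
    intro k' h
    exact SeqContAux3.sing habc hgen hg (by omega) (hW k' (by omega)) (hW (k'+1) h)
  set cf : ℕ → C := fun k => if h : 1 ≤ k ∧ k ≤ ℓ then (cex (k-1) (by omega)).choose
    else Classical.arbitrary C with hcfdef
  have hcf : ∀ k', k' + 1 ≤ ℓ →
      g A (W k') = {cf (k'+1)} ∧ W (k'+1) = insert (cf (k'+1)) (W k') ∧ cf (k'+1) ∉ W k' := by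
    intro k' h
    have hcond : 1 ≤ k' + 1 ∧ k' + 1 ≤ ℓ := ⟨by omega, h⟩
    simp only [hcfdef, dif_pos hcond, Nat.add_sub_cancel]
    exact (cex k' h).choose_spec
  have hWc : ∀ k', k' + 1 ≤ ℓ →
      W (k'+1) = insert (cf (k'+1)) (W k') ∧ cf (k'+1) ∉ W k' :=
    fun k' h => ⟨(hcf k' h).2.1, (hcf k' h).2.2⟩
  -- main induction
  have main : ∀ k, k ≤ ℓ → ∃ N, 0 < N ∧ ∀ n, N ≤ n → ∀ B : Profile C,
      IsNCopies n A B → B.Disj A' → ∀ k', k' ≤ k → f (B.combine A') k' = {W k'} := by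
    intro k
    induction k with
    | zero =>
      intro _
      refine ⟨1, by omega, fun n hn B hB hd k' hk' => ?_⟩
      have hk0 : k' = 0 := by omega
      subst hk0
      rw [habc.1, hW0]
    | succ k ih =>
      intro hk1
      obtain ⟨N₁, hN₁pos, hN₁⟩ := ih (by omega)
      -- fresh canonical copies
      set M := A'.voters.sup id with hM
      have hinj : ∀ s : ℕ, Set.InjOn (fun a => M + 1 + Nat.pair s a) ↑A.voters := by
        intro s a _ b _ hab
        simp only at hab
        have hpq : Nat.pair s a = Nat.pair s b := by omega
        exact (Nat.pair_eq_pair.mp hpq).2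
      choose π hπ using fun s =>
        SeqContAux.exists_perm_extend A.voters (fun a => M + 1 + Nat.pair s a) (hinj s)
      have hmemblock : ∀ s x, x ∈ A.voters.map (π s).toEmbedding →
          ∃ a ∈ A.voters, x = M + 1 + Nat.pair s a := by
        intro s x hx
        simp only [Finset.mem_map, Equiv.coe_toEmbedding] at hx
        obtain ⟨a, ha, rfl⟩ := hx
        exact ⟨a, ha, by rw [hπ s a ha]⟩
      have hblocks : ∀ s t, s ≠ t →
          Disjoint (A.voters.map (π s).toEmbedding) (A.voters.map (π t).toEmbedding) := by
        intro s t hst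
        rw [Finset.disjoint_left]
        intro x hxs hxt
        obtain ⟨a, _, hxa⟩ := hmemblock s x hxs
        obtain ⟨b, _, hxb⟩ := hmemblock t x hxt
        have hpq : Nat.pair s a = Nat.pair t b := by omega
        exact hst (Nat.pair_eq_pair.mp hpq).1
      have hA'blocks : ∀ s, Disjoint (A.voters.map (π s).toEmbedding) A'.voters := by
        intro s
        rw [Finset.disjoint_left]
        intro x hxs hxA'
        obtain ⟨a, _, hxa⟩ := hmemblock s x hxs
        have : x ≤ M := Finset.le_sup (f := id) hxA'
        omega
      have hchain : ∀ i, ∀ k'' ≤ ℓ, f (SeqContAux4.chainProf A π i) k'' = {W k''} :=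
        SeqContAux4.chainProf_chain habc hgen hg hcons hanon h2 hW hWcard hWc hW0 π hblocks
      have hdisjE : (SeqContAux4.chainProf A π (N₁-1)).Disj A' := by
        show Disjoint _ _
        rw [SeqContAux4.chainProf_voters]
        apply Finset.disjoint_biUnion_left _ _ _ |>.mpr
        intro s _
        exact hA'blocks s
      obtain ⟨jj, hjjpos, hjj⟩ := hcont (SeqContAux4.chainProf A π (N₁-1)) A' (k+1) hdisjE
        (by rw [hchain (N₁-1) (k+1) hk1]; exact Finset.card_singleton _)
      refine ⟨N₁ * jj, by positivity, ?_⟩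
      intro n hn
      induction n, hn using Nat.le_induction with
      | base =>
        intro B hB hd k' hk'
        rcases Nat.lt_or_ge k' (k+1) with hlt | hge
        · exact hN₁ _ (Nat.le_mul_of_pos_right _ hjjpos) B hB hd k' (by omega)
        · have hk'' : k' = k + 1 := by omega
          subst hk''
          have hBc : IsNCopies ((N₁ - 1 + 1) * jj) A B := by
            rw [show N₁ - 1 + 1 = N₁ from by omega]; exact hB
          have hre : IsNCopies jj (SeqContAux4.chainProf A π (N₁-1)) B :=
            SeqContAux5.regroup hjjpos π hblocks hBc
          rw [hjj B hre hd, hchain (N₁-1) (k+1) hk1]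
      | succ n hn ihn =>
        intro B hB hd
        obtain ⟨σ, B', hB', hdB', hdC, hident⟩ := SeqContAux4.decomp hB hd
        have chY : ∀ k' ≤ k+1, f (B'.combine A') k' = {W k'} :=
          fun k' h => ihn B' hB' hdB' k' h
        have chU : ∀ k' ≤ k+1, f (Profile.permVoters σ A) k' = {W k'} :=
          fun k' h => by rw [hanon A σ k']; exact hW k' (by omega)
        have hcW' : ∀ k', k' + 1 ≤ k+1 →
            W (k'+1) = insert (cf (k'+1)) (W k') ∧ cf (k'+1) ∉ W k' :=
          fun k' h => hWc k' (by omega)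
        have hstep := SeqContAux3.step habc hgen hg hcons (by omega)
          (fun k'' h => hWcard k'' (by omega)) (fun k'' h => (hcW' k'' h).1) hW0 hdC
          (SeqContAux3.pin habc hgen hg hcW' (by omega) chU)
          (SeqContAux3.pin habc hgen hg hcW' (by omega) chY)
        intro k' hk'
        rw [hident]
        exact hstep k' hk'
  obtain ⟨N, hNpos, hN⟩ := main ℓ (le_refl ℓ)
  refine ⟨N, hNpos, fun B hB hd k hk1 hkℓ => ?_⟩
  rw [hN N (le_refl N) B hB hd k hkℓ, hW k hkℓ]
end

section
/- Let f be a proper, consistently committee-monotone ABC voting rule over m candidates. For every ℓ ∈ {1,...,m-1} and every increasing sequence of committees W_1 ⊆ ... ⊆ W_ℓ with |W_k| = k, there exists a profile A such that f(A,k) = {W_k} for all k ∈ {1,...,ℓ} and f(A,ℓ+1) = {W_ℓ ∪ {x} : x ∈ C \ W_ℓ}. -/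
open Finset
open scoped Classical

variable {C : Type} [Fintype C] [DecidableEq C]

/-!
Induction on `ℓ`. If a clean profile `E` elects `W 1, …, W t` as unique winners, so does the
disjoint union of the copies of `E` relabelled by all permutations fixing `W t` (consistency), and
each swap of two candidates outside `W t` turns that union into a voter relabelling of itself. By
neutrality and anonymity the set of candidates that the generator adds to `W t` is then invariant
under these swaps, hence it is all of `C \ W t`: a full tie.

For the inductive step, non-imposition gives a profile `D` electing `W (t + 1)`; below it lies a
chain `V` generated in `D`. Adding to `D` a disjoint profile electing `V 1, …, V t` with a full tie
after `V t` makes the generator of the sum pick exactly the links of `V` (consistency), so the sum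
elects `V` uniquely, and neutrality carries `V` to `W`.
-/

theorem Nat.pair_right_injective (u : ℕ) : Function.Injective (Nat.pair u) :=
  fun _ _ h => (Nat.pair_eq_pair.1 h).2

theorem Finset.image_insert_inj {α : Type} [DecidableEq α] {S T U : Finset α}
    (hS : Disjoint S U) (hT : Disjoint T U) :
    S.image (insert · U) = T.image (insert · U) ↔ S = T := by
  rw [← coe_inj, ← coe_inj, coe_image, coe_image]
  exact (insert_inj_on U).image_eq_image_iff (by simpa [Set.subset_compl_iff_disjoint_right])
    (by simpa [Set.subset_compl_iff_disjoint_right])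

namespace Profile

section
variable {α : Type}

@[ext] theorem ext {A B : Profile α} (hv : A.voters = B.voters) (hb : A.ballot = B.ballot) :
    A = B := by
  cases A; cases B; congr

-- `f` may read the ballots of non-voters, so profiles are only identified when these are `∅`.
def Clean (A : Profile α) : Prop := ∀ i ∉ A.voters, A.ballot i = ∅

theorem Clean.combine {A B : Profile α} (hB : B.Clean) : (A.combine B).Clean := by
  intro i hi
  simp only [Profile.combine, mem_union, not_or] at hi ⊢
  rw [if_neg hi.1, hB i hi.2]

theorem Clean.mapCand [DecidableEq α] {A : Profile α} (hA : A.Clean) (τ : Equiv.Perm α) :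
    (A.mapCand τ).Clean := fun i hi => by
  simp [Profile.mapCand, hA i hi]

theorem mapCand_mapCand [DecidableEq α] (σ τ : Equiv.Perm α) (A : Profile α) :
    (A.mapCand τ).mapCand σ = A.mapCand (σ * τ) := by
  ext1
  · rfl
  · funext i
    simp [Profile.mapCand, image_image, Function.comp_def]

/-- Voter `Nat.pair u r` casts the ballot of voter `r` of `P u`, for every `u ∈ S`: the disjoint
union of the profiles `P u`. -/
def tagged (S : Finset ℕ) (P : ℕ → Profile α) : Profile α where
  voters := S.biUnion fun u => (P u).voters.map ⟨Nat.pair u, Nat.pair_right_injective u⟩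
  ballot i :=
    if (Nat.unpair i).1 ∈ S ∧ (Nat.unpair i).2 ∈ (P (Nat.unpair i).1).voters then
      (P (Nat.unpair i).1).ballot (Nat.unpair i).2
    else ∅

variable {S : Finset ℕ} {P : ℕ → Profile α}

theorem mem_tagged_voters {i : ℕ} :
    i ∈ (tagged S P).voters ↔
      (Nat.unpair i).1 ∈ S ∧ (Nat.unpair i).2 ∈ (P (Nat.unpair i).1).voters := by
  simp only [tagged, mem_biUnion, mem_map]
  constructor
  · rintro ⟨u, hu, r, hr, rfl⟩
    simp only [Function.Embedding.coeFn_mk, Nat.unpair_pair]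
    exact ⟨hu, hr⟩
  · exact fun h => ⟨_, h.1, _, h.2, Nat.pair_unpair i⟩

theorem clean_tagged : (tagged S P).Clean := fun _ hi => if_neg (mem_tagged_voters.not.1 hi)

theorem isCopy_tagged_singleton (a : ℕ) : IsCopy (P a) (tagged {a} P) := by
  refine ⟨⟨Nat.pair a, Nat.pair_right_injective a⟩, by simp [tagged], fun i hi => ?_⟩
  simp [tagged, hi]

theorem tagged_insert (a : ℕ) : tagged (insert a S) P = (tagged {a} P).combine (tagged S P) := by
  ext1
  · simp [tagged, Profile.combine, biUnion_insert]
  · funext i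
    simp only [Profile.combine, mem_tagged_voters]
    simp only [tagged, mem_insert, mem_singleton]
    generalize (Nat.unpair i).1 = u
    split_ifs <;> aesop

theorem disj_tagged_singleton {a : ℕ} (ha : a ∉ S) : Disj (tagged {a} P) (tagged S P) := by
  refine Finset.disjoint_left.2 fun i hi hi' => ?_
  rw [mem_tagged_voters, mem_singleton] at hi
  rw [mem_tagged_voters, hi.1] at hi'
  exact ha hi'.1

theorem tagged_congr {Q : ℕ → Profile α} (h : ∀ u ∈ S, P u = Q u) : tagged S P = tagged S Q := by
  ext1
  · exact biUnion_congr rfl fun u hu => by rw [h u hu]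
  · funext i
    by_cases hu : (Nat.unpair i).1 ∈ S
    · simp only [tagged, h _ hu]
    · simp only [tagged, hu, false_and, if_false]

theorem mapCand_tagged [DecidableEq α] (τ : Equiv.Perm α) :
    (tagged S P).mapCand τ = tagged S fun u => (P u).mapCand τ := by
  ext1
  · rfl
  · funext i
    by_cases h : (Nat.unpair i).1 ∈ S ∧ (Nat.unpair i).2 ∈ (P (Nat.unpair i).1).voters
    · simp [Profile.mapCand, tagged, h]
    · simp [Profile.mapCand, tagged, h, -not_and, -and_imp]

theorem permVoters_tagged (s : Equiv.Perm ℕ) :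
    (tagged S P).permVoters (Nat.pairEquiv.permCongr (s.prodCongr (Equiv.refl ℕ))) =
      tagged (S.map s.toEmbedding) fun u => P (s.symm u) := by
  have hsymm : ∀ i, (Nat.pairEquiv.permCongr (s.prodCongr (Equiv.refl ℕ))).symm i =
      Nat.pair (s.symm (Nat.unpair i).1) (Nat.unpair i).2 := fun _ => rfl
  ext1
  · ext i
    simp only [Profile.permVoters, mem_map_equiv, hsymm, mem_tagged_voters, Nat.unpair_pair]
  · funext i
    simp only [Profile.permVoters, hsymm, tagged, Nat.unpair_pair, mem_map_equiv]

theorem exists_permVoters_tagged_eq_mapCand [DecidableEq α] {ι : Type} [Fintype ι] {code : ι → ℕ}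
    (hcode : Function.Injective code) {P : ℕ → Profile α} {τ : Equiv.Perm α} (e : Equiv.Perm ι)
    (hP : ∀ i, P (code (e i)) = (P (code i)).mapCand τ) :
    ∃ π : Equiv.Perm ℕ, (tagged (univ.image code) P).permVoters π =
      (tagged (univ.image code) P).mapCand τ := by
  obtain ⟨s, hs⟩ := Equiv.Perm.exists_extending_pair (code ∘ e) code (hcode.comp e.injective) hcode
  have hs' : ∀ i, s (code i) = code (e.symm i) := fun i => by
    simpa using hs (e.symm i)
  refine ⟨Nat.pairEquiv.permCongr (s.prodCongr (Equiv.refl ℕ)), ?_⟩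
  rw [permVoters_tagged, mapCand_tagged]
  have hS : (univ.image code).map s.toEmbedding = univ.image code := by
    have : s ∘ code = code ∘ e.symm := funext hs'
    rw [map_eq_image, image_image, Equiv.coe_toEmbedding, this, ← image_image,
      image_univ_equiv]
  rw [hS]
  refine tagged_congr fun u hu => ?_
  obtain ⟨i, -, rfl⟩ := mem_image.1 hu
  rw [← hP i]
  exact congrArg P (s.symm_apply_eq.2 (hs i).symm)

end

end Profile

def IsCommitteeChain {α : Type} [DecidableEq α] (t : ℕ) (V : ℕ → Finset α) : Prop :=
  V 0 = ∅ ∧ ∀ k < t, ∃ x ∉ V k, insert x (V k) = V (k + 1)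

namespace IsCommitteeChain

variable {α : Type} [DecidableEq α] {t : ℕ} {V : ℕ → Finset α}

theorem of_le (hV : IsCommitteeChain t V) {s : ℕ} (hs : s ≤ t) : IsCommitteeChain s V :=
  ⟨hV.1, fun k hk => hV.2 k (by omega)⟩

theorem mono (hV : IsCommitteeChain t V) {i j : ℕ} (hij : i ≤ j) (hj : j ≤ t) : V i ⊆ V j := by
  induction j, hij using Nat.le_induction with
  | base => exact Subset.rfl
  | succ j _ ih =>
    obtain ⟨x, -, hx⟩ := hV.2 j (by omega)
    exact (ih (by omega)).trans (hx ▸ subset_insert x (V j))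

theorem card (hV : IsCommitteeChain t V) {k : ℕ} (hk : k ≤ t) : (V k).card = k := by
  induction k with
  | zero => rw [hV.1, card_empty]
  | succ k ih =>
    obtain ⟨x, hx, hxV⟩ := hV.2 k (by omega)
    rw [← hxV, card_insert_of_notMem hx, ih (by omega)]

theorem exists_embedding (hV : IsCommitteeChain t V) :
    ∃ x : Fin t ↪ α, ∀ k : Fin t, insert (x k) (V k) = V (k + 1) := by
  choose x hxV hx using fun k : Fin t => hV.2 k k.2
  have hlt : ∀ i j : Fin t, i < j → x i ≠ x j := fun i j hij hxij =>
    hxV j (hxij ▸ hV.mono (Nat.succ_le_of_lt hij) j.2.le (hx i ▸ mem_insert_self _ _))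
  refine ⟨⟨x, fun i j hij => ?_⟩, hx⟩
  rcases lt_trichotomy i j with h | h | h
  · exact absurd hij (hlt i j h)
  · exact h
  · exact absurd hij.symm (hlt j i h)

theorem exists_perm {W : ℕ → Finset α} (hV : IsCommitteeChain t V) (hW : IsCommitteeChain t W) :
    ∃ τ : Equiv.Perm α, ∀ k ≤ t, (V k).image τ = W k := by
  obtain ⟨x, hx⟩ := hV.exists_embedding
  obtain ⟨y, hy⟩ := hW.exists_embedding
  obtain ⟨τ, hτ⟩ := Equiv.Perm.exists_extending_pair x y x.injective y.injective
  refine ⟨τ, fun k hk => ?_⟩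
  induction k with
  | zero => rw [hV.1, hW.1, image_empty]
  | succ k ih =>
    rw [← hx ⟨k, hk⟩, ← hy ⟨k, hk⟩, image_insert, ih (by omega), hτ]

end IsCommitteeChain

open Profile

section
variable {α : Type} {f : Profile α → ℕ → Finset (Finset α)}

theorem Anonymous.apply_eq_of_isCopy (hanon : Anonymous f) {A B : Profile α} (hA : A.Clean)
    (hB : B.Clean) (h : IsCopy A B) (k : ℕ) : f B k = f A k := by
  obtain ⟨e, hv, hb⟩ := h
  obtain ⟨π, hπ⟩ := Equiv.Perm.exists_extending_pair (fun i : A.voters => (i : ℕ))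
    (fun i => e i) Subtype.val_injective (e.injective.comp Subtype.val_injective)
  have hmap : A.voters.map π.toEmbedding = B.voters := by
    rw [hv, map_eq_image, map_eq_image]
    exact image_congr fun i hi => hπ ⟨i, hi⟩
  suffices B = A.permVoters π by rw [this, hanon]
  ext1
  · exact hmap.symm
  · funext i
    show B.ballot i = A.ballot (π.symm i)
    by_cases hi : π.symm i ∈ A.voters
    · have hi' : e (π.symm i) = i := by rw [← hπ ⟨_, hi⟩, Equiv.apply_symm_apply]
      rw [← hb _ hi, hi']
    · rw [hB i (by rwa [← hmap, mem_map_equiv]), hA _ hi]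

theorem exists_disjoint_copy (hanon : Anonymous f) {A : Profile α} (hA : A.Clean)
    (S : Finset ℕ) : ∃ A' : Profile α, A'.Clean ∧ Disjoint S A'.voters ∧ ∀ k, f A' k = f A k := by
  refine ⟨tagged {S.sup id + 1} fun _ => A, clean_tagged, disjoint_left.2 fun i hiS hi => ?_,
    hanon.apply_eq_of_isCopy hA clean_tagged (isCopy_tagged_singleton (P := fun _ => A) _)⟩
  rw [mem_tagged_voters, mem_singleton] at hi
  have hle : (Nat.unpair i).1 ≤ i := Nat.unpair_left_le i
  have hS : i ≤ S.sup id := le_sup (f := id) hiS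
  omega

end

variable {f : Profile C → ℕ → Finset (Finset C)} {g : Profile C → Finset C → Finset C}

theorem IsGenerator.disjoint (hgen : IsGenerator g) (A : Profile C) (U : Finset C) :
    Disjoint (g A U) U :=
  (subset_sdiff.1 (hgen A U)).2

namespace Generates

variable {A : Profile C} {k : ℕ}

theorem f_succ (hgf : Generates g f) (hk : k < Fintype.card C) :
    f A (k + 1) = (f A k).biUnion fun U => (g A U).image (insert · U) :=
  (hgf A (k + 1) (by omega) hk).2

theorem nonempty (hgf : Generates g f) (hk : k < Fintype.card C) {U : Finset C}
    (hU : U ∈ f A k) : (g A U).Nonempty :=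
  (hgf A (k + 1) (by omega) hk).1 U hU

theorem f_succ_of_eq_singleton (hgf : Generates g f) (hk : k < Fintype.card C) {U : Finset C}
    (hA : f A k = {U}) :
    f A (k + 1) = (g A U).image (insert · U) := by
  rw [hgf.f_succ hk, hA, singleton_biUnion]

end Generates

theorem f_combine_eq_singleton (hf : IsABCRule f) (hgf : Generates g f) (hcons : ConsistentGen g)
    {X Y : Profile C} (hXY : Disj X Y) {t : ℕ} (ht : t ≤ Fintype.card C) {V : ℕ → Finset C}
    (hV0 : V 0 = ∅)
    (hV : ∀ k < t, (g X (V k) ∩ g Y (V k)).image (insert · (V k)) = {V (k + 1)}) :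
    ∀ k ≤ t, f (X.combine Y) k = {V k} := by
  intro k hk
  induction k with
  | zero => rw [hf.1, hV0]
  | succ k ih =>
    have ih := ih (by omega)
    have hmem : V k ∈ f (X.combine Y) k := ih ▸ mem_singleton_self _
    have hVk : V k ≠ univ := by
      intro h
      have hcard := hf.2.2 _ _ _ hmem
      rw [h, card_univ] at hcard
      omega
    have hinter : (g X (V k) ∩ g Y (V k)).Nonempty := by
      rw [← image_nonempty (f := (insert · (V k))), hV k (by omega)]
      exact singleton_nonempty _
    rw [hgf.f_succ_of_eq_singleton (by omega) ih,
      hcons X Y (V k) hXY hVk hinter (hgf.nonempty (by omega) hmem), hV k (by omega)]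

theorem f_combine_eq_singleton_of_eq (hf : IsABCRule f) (hgen : IsGenerator g) (hgf : Generates g f)
    (hcons : ConsistentGen g) {X Y : Profile C} (hXY : Disj X Y) {t : ℕ}
    (ht : t ≤ Fintype.card C) {V : ℕ → Finset C} (hX : ∀ k ≤ t, f X k = {V k})
    (hY : ∀ k ≤ t, f Y k = {V k}) : ∀ k ≤ t, f (X.combine Y) k = {V k} := by
  refine f_combine_eq_singleton hf hgf hcons hXY ht ?_ fun k hk => ?_
  · simpa [hf.1] using (hX 0 (Nat.zero_le _)).symm
  have hXk := hgf.f_succ_of_eq_singleton (by omega) (hX k hk.le)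
  have hYk := hgf.f_succ_of_eq_singleton (by omega) (hY k hk.le)
  have hXY : g X (V k) = g Y (V k) := by
    refine (image_insert_inj (hgen.disjoint _ _) (hgen.disjoint _ _)).1 ?_
    rw [← hXk, ← hYk, hX _ hk, hY _ hk]
  rw [hXY, inter_self, ← hYk, hY _ hk]

theorem f_tagged_eq_singleton (hf : IsABCRule f) (hgen : IsGenerator g) (hgf : Generates g f)
    (hcons : ConsistentGen g) (hanon : Anonymous f) {t : ℕ} (ht : t ≤ Fintype.card C)
    {V : ℕ → Finset C} {S : Finset ℕ} (hS : S.Nonempty) {P : ℕ → Profile C}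
    (hP : ∀ u ∈ S, (P u).Clean ∧ ∀ k ≤ t, f (P u) k = {V k}) :
    ∀ k ≤ t, f (tagged S P) k = {V k} := by
  have hsingle : ∀ a ∈ S, ∀ k, f (tagged {a} P) k = f (P a) k := fun a ha =>
    hanon.apply_eq_of_isCopy (hP a ha).1 clean_tagged (isCopy_tagged_singleton a)
  induction hS using Finset.Nonempty.cons_induction with
  | singleton a => simpa [hsingle a (mem_singleton_self a)] using (hP a (mem_singleton_self a)).2
  | cons a S ha hS ih =>
    have hP' : ∀ u ∈ S, (P u).Clean ∧ ∀ k ≤ t, f (P u) k = {V k} :=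
      fun u hu => hP u (mem_cons_of_mem hu)
    rw [cons_eq_insert, tagged_insert]
    refine f_combine_eq_singleton_of_eq hf hgen hgf hcons (disj_tagged_singleton ha) ht
      (fun k hk => ?_) (ih hP' fun u hu => hsingle u (mem_cons_of_mem hu))
    rw [hsingle a (mem_cons_self a S)]
    exact (hP a (mem_cons_self a S)).2 k hk

theorem exists_chain_of_mem (hgf : Generates g f) (D : Profile C) :
    ∀ j ≤ Fintype.card C, ∀ U ∈ f D j, ∃ V : ℕ → Finset C, V j = U ∧ (∀ k ≤ j, V k ∈ f D k) ∧
      ∀ k < j, ∃ y ∈ g D (V k), insert y (V k) = V (k + 1) := by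
  intro j hj
  induction j with
  | zero =>
    intro U hU
    refine ⟨fun _ => U, rfl, fun k hk => ?_, fun k hk => absurd hk (Nat.not_lt_zero k)⟩
    rwa [Nat.le_zero.1 hk]
  | succ j ih =>
    intro U hU
    rw [hgf.f_succ (k := j) (by omega)] at hU
    obtain ⟨U', hU', hUU'⟩ := mem_biUnion.1 hU
    obtain ⟨y, hy, rfl⟩ := mem_image.1 hUU'
    obtain ⟨V, hVj, hVmem, hVlink⟩ := ih (by omega) U' hU'
    refine ⟨Function.update V (j + 1) (insert y U'), by simp, fun k hk => ?_, fun k hk => ?_⟩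
    · rcases (Nat.le_succ_iff.1 hk) with hk | rfl
      · rw [Function.update_of_ne (by omega)]
        exact hVmem k hk
      · rw [Function.update_self, hgf.f_succ (by omega)]
        exact mem_biUnion.2 ⟨U', hU', mem_image_of_mem _ hy⟩
    · rw [Function.update_of_ne (by omega)]
      rcases (Nat.lt_succ_iff.1 hk).lt_or_eq with hk | rfl
      · rw [Function.update_of_ne (by omega)]
        exact hVlink k hk
      · rw [Function.update_self, hVj]
        exact ⟨y, hy, rfl⟩

theorem f_combine_eq_singleton_of_tie (hf : IsABCRule f) (hgen : IsGenerator g)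
    (hgf : Generates g f) (hcons : ConsistentGen g) {D A : Profile C} (hDA : Disj D A) {t : ℕ}
    (ht : t + 1 ≤ Fintype.card C) {V : ℕ → Finset C} (hD : f D (t + 1) = {V (t + 1)})
    (hDV : V t ∈ f D t) (hlink : ∀ k < t, ∃ y ∈ g D (V k), insert y (V k) = V (k + 1))
    (hA : ∀ k ≤ t, f A k = {V k})
    (htie : f A (t + 1) = (univ \ V t).image (insert · (V t))) :
    ∀ k ≤ t + 1, f (D.combine A) k = {V k} := by
  have hV0 : V 0 = ∅ := by simpa [hf.1] using (hA 0 (Nat.zero_le _)).symm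
  refine f_combine_eq_singleton hf hgf hcons hDA ht hV0 fun k hk => ?_
  rcases (Nat.lt_succ_iff.1 hk).lt_or_eq with hk | rfl
  · obtain ⟨y, hy, hyV⟩ := hlink k hk
    have hgA : g A (V k) = {y} := by
      refine (image_insert_inj (hgen.disjoint A (V k))
        (disjoint_singleton_left.2 (disjoint_left.1 (hgen.disjoint D (V k)) hy))).1 ?_
      rw [← hgf.f_succ_of_eq_singleton (by omega) (hA k hk.le), hA (k + 1) hk, image_singleton, hyV]
    rw [hgA, inter_singleton_of_mem hy, image_singleton, hyV]
  · have hgA : g A (V k) = univ \ V k :=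
      (image_insert_inj (hgen.disjoint A (V k)) sdiff_disjoint).1
        (by rw [← htie, hgf.f_succ_of_eq_singleton (by omega) (hA k le_rfl)])
    rw [hgA, inter_eq_left.2 (hgen D (V k))]
    refine ((hgf.nonempty (by omega) hDV).image _).subset_singleton_iff.1 ?_
    rw [← hD, hgf.f_succ (by omega)]
    exact subset_biUnion_of_mem (fun U => (g D U).image (insert · U)) hDV

theorem f_succ_eq_of_swap_invariant (hgen : IsGenerator g) (hgf : Generates g f)
    (hneut : Neutral f) {F : Profile C} {t : ℕ} (ht : t < Fintype.card C) {U : Finset C}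
    (hF : f F t = {U})
    (hswap : ∀ x ∉ U, ∀ y ∉ U, f (F.mapCand (Equiv.swap x y)) (t + 1) = f F (t + 1)) :
    f F (t + 1) = (univ \ U).image (insert · U) := by
  have hFt := hgf.f_succ_of_eq_singleton ht hF
  rw [hFt]
  congr 1
  refine Subset.antisymm (hgen F U) fun y hy => ?_
  have hyU := (mem_sdiff.1 hy).2
  obtain ⟨x, hx⟩ := hgf.nonempty ht (hF ▸ mem_singleton_self U)
  have hxU : x ∉ U := disjoint_left.1 (hgen.disjoint F U) hx
  have hfix : U.image (Equiv.swap x y) = U := by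
    conv_rhs => rw [← image_id (s := U)]
    exact image_congr fun c hc =>
      Equiv.swap_apply_of_ne_of_ne (fun h => hxU (h ▸ hc)) (fun h => hyU (h ▸ hc))
  have hyF : insert y U ∈ f F (t + 1) := by
    rw [← hswap x hxU y hyU, hneut, hFt, image_image]
    exact mem_image.2 ⟨x, hx, by simp [image_insert, hfix]⟩
  rw [hFt] at hyF
  obtain ⟨z, hz, hzy⟩ := mem_image.1 hyF
  rwa [← (insert_inj (disjoint_left.1 (hgen.disjoint F U) hz)).1 hzy]

theorem exists_clean_tie (hf : IsABCRule f) (hgen : IsGenerator g) (hgf : Generates g f)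
    (hcons : ConsistentGen g) (hanon : Anonymous f) (hneut : Neutral f) {t : ℕ}
    (ht : t < Fintype.card C) {V : ℕ → Finset C} (hV : IsCommitteeChain t V) {E : Profile C}
    (hE : E.Clean) (hEV : ∀ k ≤ t, f E k = {V k}) :
    ∃ F : Profile C, F.Clean ∧ (∀ k ≤ t, f F k = {V k}) ∧
      f F (t + 1) = (univ \ V t).image (insert · (V t)) := by
  let H := Equiv.Perm {c // c ∉ V t}
  let code : H → ℕ := fun ρ => Fintype.equivFin H ρ
  have hcode : Function.Injective code := Fin.val_injective.comp (Fintype.equivFin H).injective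
  let P : ℕ → Profile C := fun u => E.mapCand (Equiv.Perm.ofSubtype (Function.invFun code u))
  have hP : ∀ ρ, P (code ρ) = E.mapCand (Equiv.Perm.ofSubtype ρ) := fun ρ => by
    simp only [P, Function.leftInverse_invFun hcode ρ]
  have hfix : ∀ (ρ : H), ∀ k ≤ t, (V k).image (Equiv.Perm.ofSubtype ρ) = V k := by
    intro ρ k hk
    conv_rhs => rw [← image_id (s := V k)]
    exact image_congr fun c hc =>
      Equiv.Perm.ofSubtype_apply_of_not_mem ρ (not_not.2 (hV.mono hk le_rfl hc))
  have hF : ∀ k ≤ t, f (tagged (univ.image code) P) k = {V k} := by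
    refine f_tagged_eq_singleton hf hgen hgf hcons hanon ht.le (univ_nonempty.image _)
      fun u hu => ?_
    obtain ⟨ρ, -, rfl⟩ := mem_image.1 hu
    refine ⟨hP ρ ▸ hE.mapCand _, fun k hk => ?_⟩
    rw [hP, hneut, hEV k hk, image_singleton, hfix ρ k hk]
  refine ⟨_, clean_tagged, hF, f_succ_eq_of_swap_invariant hgen hgf hneut ht (hF t le_rfl) ?_⟩
  intro x hx y hy
  obtain ⟨π, hπ⟩ := exists_permVoters_tagged_eq_mapCand hcode
    (Equiv.mulLeft (Equiv.swap ⟨x, hx⟩ ⟨y, hy⟩)) (τ := Equiv.swap x y) (P := P) fun ρ => by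
      rw [hP, hP, mapCand_mapCand, Equiv.coe_mulLeft, map_mul, Equiv.Perm.ofSubtype_swap_eq]
  rw [← hπ, hanon]

theorem exists_clean_eq_singleton (hf : IsABCRule f) (hgen : IsGenerator g) (hgf : Generates g f)
    (hcons : ConsistentGen g) (hanon : Anonymous f) (hneut : Neutral f) (hni : NonImposing f) :
    ∀ t ≤ Fintype.card C, ∀ V : ℕ → Finset C, IsCommitteeChain t V →
      ∃ E : Profile C, E.Clean ∧ ∀ k ≤ t, f E k = {V k} := by
  intro t ht
  induction t with
  | zero =>
    intro V hV
    refine ⟨⟨∅, fun _ => ∅⟩, fun _ _ => rfl, fun k hk => ?_⟩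
    rw [Nat.le_zero.1 hk, hf.1, hV.1]
  | succ t ih =>
    intro V hV
    obtain ⟨D, hD⟩ := hni (V (t + 1))
    rw [hV.card le_rfl] at hD
    obtain ⟨V', hV't, hV'D, hlink⟩ :=
      exists_chain_of_mem hgf D (t + 1) ht _ (hD ▸ mem_singleton_self _)
    have hV' : IsCommitteeChain (t + 1) V' := by
      refine ⟨by simpa [hf.1] using hV'D 0 (Nat.zero_le _), fun k hk => ?_⟩
      obtain ⟨y, hy, hyV⟩ := hlink k hk
      exact ⟨y, disjoint_left.1 (hgen.disjoint D _) hy, hyV⟩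
    obtain ⟨E, hE, hEV⟩ := ih (by omega) V' (hV'.of_le (by omega))
    obtain ⟨A, hA, hAV, htie⟩ := exists_clean_tie hf hgen hgf hcons hanon hneut (by omega)
      (hV'.of_le (by omega)) hE hEV
    obtain ⟨A', hA', hdisj, hA'A⟩ := exists_disjoint_copy hanon hA D.voters
    have hcomb := f_combine_eq_singleton_of_tie hf hgen hgf hcons hdisj ht (hV't ▸ hD)
      (hV'D t (by omega)) (fun k hk => hlink k (by omega)) (fun k hk => (hA'A k).trans (hAV k hk))
      ((hA'A _).trans htie)
    obtain ⟨τ, hτ⟩ := hV'.exists_perm hV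
    refine ⟨(D.combine A').mapCand τ, hA'.combine.mapCand τ, fun k hk => ?_⟩
    rw [hneut, hcomb k hk, image_singleton, hτ k hk]

/-- Strengthened non-imposition for proper consistently committee monotone ABC voting rules:
every increasing sequence of committees can be enforced as the unique winners, and in the next
step all remaining candidates are tied. -/
theorem seq_nonImposition (f : Profile C → ℕ → Finset (Finset C))
    (hp : ProperRule f) (hc : ConsistentlyCommitteeMonotone f)
    (ℓ : ℕ) (h1 : 1 ≤ ℓ) (h2 : ℓ ≤ Fintype.card C - 1)
    (W : ℕ → Finset C) (hW0 : W 0 = ∅)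
    (hWc : ∀ k, 1 ≤ k → k ≤ ℓ → (W k).card = k ∧ W (k-1) ⊆ W k) :
    ∃ A : Profile C, (∀ k, 1 ≤ k → k ≤ ℓ → f A k = {W k}) ∧
      f A (ℓ+1) = (univ \ W ℓ).image fun x => insert x (W ℓ) := by
  obtain ⟨hf, hanon, hneut, -, hni⟩ := hp
  obtain ⟨g, hgen, hcons, hgf⟩ := hc
  have hW : IsCommitteeChain ℓ W := by
    refine ⟨hW0, fun k hk => exists_eq_insert_iff.2 ⟨(hWc (k + 1) (by omega) hk).2, ?_⟩⟩
    rw [(hWc (k + 1) (by omega) hk).1]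
    rcases Nat.eq_zero_or_pos k with rfl | hk0
    · rw [hW0, card_empty]
    · rw [(hWc k hk0 hk.le).1]
  obtain ⟨E, hE, hEW⟩ :=
    exists_clean_eq_singleton hf hgen hgf hcons hanon hneut hni ℓ (by omega) W hW
  obtain ⟨F, -, hFW, htie⟩ :=
    exists_clean_tie hf hgen hgf hcons hanon hneut (by omega) hW hE hEW
  exact ⟨F, fun k _ hk => hFW k hk, htie⟩
end

section
/- Let F be an anonymous, neutral, and consistent social choice function on approval profiles where each ballot has fixed size k over a candidate set B. For every profile A and candidates a, b ∈ B with equal approval scores s(A,a) = s(A,b), it holds that a ∈ F(A) if and only if b ∈ F(A). -/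
open Finset
open scoped Classical

variable {C : Type} [Fintype C] [DecidableEq C]

/-- A valid profile for committee-size-`k` ballots: a nonempty electorate in which every
voter approves exactly `k` candidates. -/
def Valid (k : ℕ) (A : Profile C) : Prop :=
  A.voters.Nonempty ∧ ∀ i ∈ A.voters, (A.ballot i).card = k

/-- The approval score of candidate `c` in profile `A`. -/
def appScore (A : Profile C) (c : C) : ℕ :=
  (A.voters.filter fun i => c ∈ A.ballot i).card

/-- Approval voting: the candidates with maximal approval score. -/
def AV (A : Profile C) : Finset C :=
  univ.filter fun c => ∀ d, appScore A d ≤ appScore A c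

/-- Anti-approval voting: the candidates with minimal approval score. -/
def antiAV (A : Profile C) : Finset C :=
  univ.filter fun c => ∀ d, appScore A c ≤ appScore A d

/-!
Let `H` be the group of permutations fixing `a` and `b`, and let `P = ∑_{σ ∈ H} σ A` be the
union of relabelled copies of `A` on pairwise disjoint electorates. Neutrality gives
`F (σ A) = σ (F A) ∋ a` for `σ ∈ H`, so consistency gives `F P = ⋂_{σ ∈ H} σ (F A)`, which
contains `a` and lies in `F A`. Since `a` and `b` have equal scores, the voters approving only
`a` among the two can be matched with those approving only `b`; as `H` is transitive on
`k`-sets with a prescribed intersection with `{a, b}`, this matching exhibits `swap a b • P` as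
`P` with its voters renamed. Hence `F P` is invariant under `swap a b`, and `b ∈ F P ⊆ F A`.

A profile also assigns ballots to non-voters, and anonymity cannot move these freely. They do
not matter: adjoining, on fresh voters, the profile in which every `k`-set is cast once (its
outcome is all of `C` by symmetry) overwrites them without changing the outcome.
-/

section Permutations

variable {α : Type*} [DecidableEq α]

theorem Finset.exists_perm_fixing_image_eq {X U S : Finset α} (hcard : #U = #S)
    (hX : U ∩ X = S ∩ X) : ∃ δ : Equiv.Perm α, (∀ x ∈ X, δ x = x) ∧ U.image δ = S := by
  have hcard' : #(U.subtype (· ∉ X)) = #(S.subtype (· ∉ X)) := by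
    have hU := Finset.card_filter_add_card_filter_not (s := U) (· ∈ X)
    have hS := Finset.card_filter_add_card_filter_not (s := S) (· ∈ X)
    rw [Finset.filter_mem_eq_inter, hX] at hU
    rw [Finset.filter_mem_eq_inter] at hS
    rw [Finset.card_subtype, Finset.card_subtype]
    omega
  obtain ⟨σ, hσ⟩ := Equiv.Perm.exists_map_finset_eq _ _ hcard'
  refine ⟨Equiv.Perm.ofSubtype σ,
    fun x hx => Equiv.Perm.ofSubtype_apply_of_not_mem σ (not_not.2 hx), ?_⟩
  refine Finset.eq_of_subset_of_card_le (fun y hy => ?_) ?_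
  · obtain ⟨x, hxU, rfl⟩ := Finset.mem_image.1 hy
    by_cases hxX : x ∈ X
    · rw [Equiv.Perm.ofSubtype_apply_of_not_mem σ (not_not.2 hxX)]
      exact Finset.mem_of_mem_inter_left (hX ▸ Finset.mem_inter.2 ⟨hxU, hxX⟩)
    · rw [Equiv.Perm.ofSubtype_apply_of_mem σ hxX]
      have hmem : σ ⟨x, hxX⟩ ∈ S.subtype (· ∉ X) :=
        hσ ▸ Finset.mem_map_of_mem _ (Finset.mem_subtype.2 hxU)
      exact Finset.mem_subtype.1 hmem
  · rw [Finset.card_image_of_injective _ (Equiv.Perm.ofSubtype σ).injective, hcard]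

theorem Finset.exists_perm_swap_image_eq {T S : Finset α} {a b : α} (hcard : #T = #S)
    (ha : a ∈ T ↔ b ∈ S) (hb : b ∈ T ↔ a ∈ S) :
    ∃ γ : Equiv.Perm α, γ a = b ∧ γ b = a ∧ T.image γ = S := by
  have hX : (T.image (Equiv.swap a b)) ∩ {a, b} = S ∩ {a, b} := by
    ext x
    have hmem : x ∈ T.image (Equiv.swap a b) ↔ Equiv.swap a b x ∈ T := by
      rw [Finset.mem_image]
      exact ⟨by rintro ⟨y, hy, rfl⟩; simpa using hy,
        fun h => ⟨_, h, Equiv.swap_apply_self a b x⟩⟩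
    simp only [Finset.mem_inter, hmem, Finset.mem_insert, Finset.mem_singleton]
    constructor <;> rintro ⟨h, rfl | rfl⟩ <;> simp_all
  obtain ⟨δ, hδ, hδS⟩ := Finset.exists_perm_fixing_image_eq
    (by rwa [Finset.card_image_of_injective _ (Equiv.swap a b).injective]) hX
  refine ⟨δ * Equiv.swap a b, ?_, ?_, ?_⟩
  · simp [hδ b (by simp)]
  · simp [hδ a (by simp)]
  · rw [← hδS, Finset.image_image]
    rfl

theorem Finset.exists_perm_of_card_filter_eq {ι κ : Type*} [DecidableEq κ] {s : Finset ι}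
    {f g : ι → κ} (h : ∀ y, #{x ∈ s | f x = y} = #{x ∈ s | g x = y}) :
    ∃ θ : Equiv.Perm ι, (∀ x ∈ s, θ x ∈ s) ∧ ∀ x ∈ s, f (θ x) = g x := by
  have hfiber : ∀ (p : ι → κ) y, Fintype.card {x : s // p x = y} = #{x ∈ s | p x = y} := by
    intro p y
    rw [← Fintype.card_coe]
    exact Fintype.card_congr ((Equiv.subtypeSubtypeEquivSubtypeInter (· ∈ s) (p · = y)).trans
      (Equiv.subtypeEquivRight fun x => by simp))
  let e : ∀ y, {x : s // g x = y} ≃ {x : s // f x = y} :=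
    fun y => Fintype.equivOfCardEq (by rw [hfiber, hfiber, h])
  let Θ : Equiv.Perm s := Equiv.ofFiberEquiv e
  have : Finite {x | x ∈ (s : Set ι)} := s.finite_toSet.to_subtype
  refine ⟨Θ.extendSubtype, fun x hx => Θ.extendSubtype_mem x hx, fun x hx => ?_⟩
  rw [Θ.extendSubtype_apply_of_mem x hx]
  exact Equiv.ofFiberEquiv_map e ⟨x, hx⟩

def pairStabilizer [Fintype α] (a b : α) : Finset (Equiv.Perm α) := {σ | σ a = a ∧ σ b = b}

theorem mem_pairStabilizer [Fintype α] {a b : α} {σ : Equiv.Perm α} :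
    σ ∈ pairStabilizer a b ↔ σ a = a ∧ σ b = b := by
  simp [pairStabilizer]

theorem pairStabilizer_nonempty [Fintype α] (a b : α) : (pairStabilizer a b).Nonempty :=
  ⟨1, mem_pairStabilizer.2 ⟨rfl, rfl⟩⟩

end Permutations

attribute [ext] Profile

namespace Profile

variable {C : Type}

theorem valid_mapCand [DecidableEq C] {k : ℕ} {A : Profile C} (hA : Valid k A)
    (τ : Equiv.Perm C) : Valid k (mapCand τ A) :=
  ⟨hA.1, fun v hv => by
    simpa [mapCand, Finset.card_image_of_injective _ τ.injective] using hA.2 v hv⟩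

noncomputable def ofFamily {ι : Type*} (enc : ι ↪ ℕ) (s : Finset ι) (b : ι → Finset C) :
    Profile C :=
  ⟨s.map enc, Function.extend enc b fun _ => ∅⟩

section OfFamily

variable {ι : Type*} (enc : ι ↪ ℕ) (s : Finset ι) (b : ι → Finset C)

@[simp]
theorem ofFamily_voters : (ofFamily enc s b).voters = s.map enc := rfl

@[simp]
theorem ofFamily_ballot_apply (i : ι) : (ofFamily enc s b).ballot (enc i) = b i :=
  enc.injective.extend_apply b (fun _ => ∅) i

theorem valid_ofFamily_iff {k : ℕ} :
    Valid k (ofFamily enc s b) ↔ s.Nonempty ∧ ∀ i ∈ s, (b i).card = k := by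
  simp [Valid]

theorem ofFamily_combine [DecidableEq ι] (t : Finset ι) :
    (ofFamily enc s b).combine (ofFamily enc t b) = ofFamily enc (s ∪ t) b := by
  ext1
  · simp [combine, Finset.map_union]
  · funext n
    simp only [combine]
    split_ifs <;> rfl

theorem disj_ofFamily {s t : Finset ι} (h : Disjoint s t) :
    (ofFamily enc s b).Disj (ofFamily enc t b) :=
  Finset.disjoint_map enc |>.mpr h

theorem mapCand_ofFamily [DecidableEq C] (τ : Equiv.Perm C) :
    mapCand τ (ofFamily enc s b) = ofFamily enc s fun i => (b i).image τ := by
  ext1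
  · rfl
  · funext n
    by_cases hn : ∃ i, enc i = n
    · obtain ⟨i, rfl⟩ := hn
      simp [mapCand]
    · simp [mapCand, ofFamily, Function.extend_apply' _ _ _ hn]

theorem permVoters_viaEmbedding_ofFamily (ρ : Equiv.Perm ι) :
    permVoters (ρ.viaEmbedding enc) (ofFamily enc s b)
      = ofFamily enc (s.map ρ.toEmbedding) (b ∘ ρ.symm) := by
  ext1
  · simp only [permVoters, ofFamily, Finset.map_map]
    congr 1
    ext x
    simp [Equiv.Perm.viaEmbedding_apply]
  · funext n
    by_cases hn : n ∈ Set.range enc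
    · obtain ⟨i, rfl⟩ := hn
      have : (ρ.viaEmbedding enc).symm (enc i) = enc (ρ.symm i) := by
        rw [Equiv.symm_apply_eq, Equiv.Perm.viaEmbedding_apply, Equiv.apply_symm_apply]
      simp [permVoters, this]
    · have : (ρ.viaEmbedding enc).symm n = n := by
        rw [Equiv.symm_apply_eq, Equiv.Perm.viaEmbedding_apply_of_notMem _ _ _ hn]
      simp only [permVoters, ofFamily, this]
      rw [Function.extend_apply' _ _ _ hn, Function.extend_apply' _ _ _ hn]

end OfFamily

noncomputable def ofAllBallots [Fintype C] {k : ℕ} (enc : {S : Finset C // S.card = k} ↪ ℕ) :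
    Profile C :=
  ofFamily enc univ Subtype.val

theorem valid_ofAllBallots [Fintype C] {k : ℕ} [Nonempty {S : Finset C // S.card = k}]
    (enc : {S : Finset C // S.card = k} ↪ ℕ) : Valid k (ofAllBallots enc) :=
  (valid_ofFamily_iff _ _ _).2 ⟨univ_nonempty, fun S _ => S.2⟩

noncomputable def orbitSum [DecidableEq C] (enc : Equiv.Perm C × ℕ ↪ ℕ) (A : Profile C)
    (S : Finset (Equiv.Perm C)) : Profile C :=
  ofFamily enc (S ×ˢ A.voters) fun x => (A.ballot x.2).image x.1

variable [DecidableEq C]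

theorem valid_orbitSum {k : ℕ} (enc : Equiv.Perm C × ℕ ↪ ℕ) {A : Profile C} (hA : Valid k A)
    {S : Finset (Equiv.Perm C)} (hS : S.Nonempty) : Valid k (A.orbitSum enc S) := by
  refine (valid_ofFamily_iff _ _ _).2 ⟨hS.product hA.1, fun x hx => ?_⟩
  rw [Finset.card_image_of_injective _ x.1.injective]
  exact hA.2 x.2 (Finset.mem_product.1 hx).2

theorem card_filter_mem_notMem_eq {A : Profile C} {a b : C}
    (hs : appScore A a = appScore A b) :
    #{v ∈ A.voters | a ∈ A.ballot v ∧ b ∉ A.ballot v}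
      = #{v ∈ A.voters | b ∈ A.ballot v ∧ a ∉ A.ballot v} := by
  have ha := Finset.card_filter_add_card_filter_not
    (s := {v ∈ A.voters | a ∈ A.ballot v}) (fun v => b ∈ A.ballot v)
  have hb := Finset.card_filter_add_card_filter_not
    (s := {v ∈ A.voters | b ∈ A.ballot v}) (fun v => a ∈ A.ballot v)
  simp only [Finset.filter_filter] at ha hb
  have hboth : #{v ∈ A.voters | a ∈ A.ballot v ∧ b ∈ A.ballot v}
      = #{v ∈ A.voters | b ∈ A.ballot v ∧ a ∈ A.ballot v} := by
    simp only [and_comm]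
  unfold appScore at hs
  omega

theorem exists_swap_pairing {k : ℕ} {A : Profile C} (hA : Valid k A) {a b : C}
    (hs : appScore A a = appScore A b) :
    ∃ θ : Equiv.Perm ℕ, ∃ γ : ℕ → Equiv.Perm C, (∀ v ∈ A.voters, θ v ∈ A.voters) ∧
      ∀ v ∈ A.voters, γ v a = b ∧ γ v b = a ∧ (A.ballot (θ v)).image (γ v) = A.ballot v := by
  obtain ⟨θ, hθA, hθ⟩ := Finset.exists_perm_of_card_filter_eq (s := A.voters)
    (f := fun v => (decide (a ∈ A.ballot v), decide (b ∈ A.ballot v)))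
    (g := fun v => (decide (b ∈ A.ballot v), decide (a ∈ A.ballot v))) (by
      have := card_filter_mem_notMem_eq hs
      rintro ⟨_ | _, _ | _⟩ <;> simp [and_comm, this])
  have hγ : ∀ v ∈ A.voters, ∃ γ : Equiv.Perm C,
      γ a = b ∧ γ b = a ∧ (A.ballot (θ v)).image γ = A.ballot v := fun v hv => by
    have hmem := hθ v hv
    simp only [Prod.mk.injEq, decide_eq_decide] at hmem
    exact Finset.exists_perm_swap_image_eq (by rw [hA.2 _ (hθA v hv), hA.2 v hv]) hmem.1 hmem.2
  choose! γ hγ using hγ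
  exact ⟨θ, γ, hθA, hγ⟩

end Profile

structure IsAnonNeutConsistent {C : Type} [DecidableEq C] (k : ℕ) (F : Profile C → Finset C) :
    Prop where
  nonempty : ∀ A, Valid k A → (F A).Nonempty
  anonymous : ∀ A (π : Equiv.Perm ℕ), Valid k A → F (Profile.permVoters π A) = F A
  neutral : ∀ A (τ : Equiv.Perm C), Valid k A → F (Profile.mapCand τ A) = (F A).image τ
  consistent : ∀ A A', Valid k A → Valid k A' → A.Disj A' →
    (F A ∩ F A').Nonempty → F (A.combine A') = F A ∩ F A'

namespace IsAnonNeutConsistent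

open Profile

variable {C : Type} [DecidableEq C] {k : ℕ} {F : Profile C → Finset C}

theorem ofFamily_biUnion_eq_inf' (hF : IsAnonNeutConsistent k F) {J ι : Type*}
    [DecidableEq ι] (enc : ι ↪ ℕ) (b : ι → Finset C) {S : Finset J} (hS : S.Nonempty)
    {t : J → Finset ι} (ht : (S : Set J).PairwiseDisjoint t)
    (hvalid : ∀ j ∈ S, Valid k (ofFamily enc (t j) b)) {a : C}
    (ha : ∀ j ∈ S, a ∈ F (ofFamily enc (t j) b)) :
    F (ofFamily enc (S.biUnion t) b) = S.inf' hS fun j => F (ofFamily enc (t j) b) := by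
  induction hS using Finset.Nonempty.cons_induction with
  | singleton j => simp
  | cons j S hj hS ih =>
    have hjS : ∀ j' ∈ S, j' ∈ S.cons j hj := fun j' => Finset.mem_cons_of_mem
    have hrest := ih (ht.subset (by simp))
      (fun j' hj' => hvalid j' (hjS j' hj')) (fun j' hj' => ha j' (hjS j' hj'))
    have hvalid_rest : Valid k (ofFamily enc (S.biUnion t) b) := by
      obtain ⟨j', hj'⟩ := hS
      obtain ⟨⟨i, hi⟩, -⟩ := (valid_ofFamily_iff _ _ _).1 (hvalid j' (hjS j' hj'))
      refine (valid_ofFamily_iff _ _ _).2 ⟨⟨i, Finset.mem_biUnion.2 ⟨j', hj', hi⟩⟩, ?_⟩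
      intro x hx
      obtain ⟨j'', hj'', hx⟩ := Finset.mem_biUnion.1 hx
      exact ((valid_ofFamily_iff _ _ _).1 (hvalid j'' (hjS j'' hj''))).2 x hx
    have hdisj : Disjoint (t j) (S.biUnion t) :=
      (Finset.disjoint_biUnion_right _ _ _).2 fun j' hj' =>
        ht (Finset.mem_cons_self j S) (hjS j' hj') fun h => hj (h ▸ hj')
    have ha_rest : a ∈ F (ofFamily enc (S.biUnion t) b) := by
      rw [hrest, Finset.mem_inf']
      exact fun j' hj' => ha j' (hjS j' hj')
    rw [Finset.inf'_cons hS, Finset.cons_eq_insert, Finset.biUnion_insert, ← ofFamily_combine,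
      hF.consistent _ _ (hvalid j (Finset.mem_cons_self j S)) hvalid_rest
        (disj_ofFamily _ _ hdisj)
        ⟨a, Finset.mem_inter.2 ⟨ha j (Finset.mem_cons_self j S), ha_rest⟩⟩,
      hrest]
    rfl

variable [Fintype C]

theorem eq_univ_ofAllBallots (hF : IsAnonNeutConsistent k F)
    [Nonempty {S : Finset C // S.card = k}] (enc : {S : Finset C // S.card = k} ↪ ℕ) :
    F (ofAllBallots enc) = univ := by
  have hZ := valid_ofAllBallots enc
  have hinv : ∀ τ : Equiv.Perm C, (F (ofAllBallots enc)).image τ = F (ofAllBallots enc) := by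
    intro τ
    let ρ : Equiv.Perm {S : Finset C // S.card = k} :=
      (τ.finsetCongr.subtypeEquiv fun S => by simp).symm
    have hsymm :
        mapCand τ (ofAllBallots enc) = permVoters (ρ.viaEmbedding enc) (ofAllBallots enc) := by
      rw [ofAllBallots, mapCand_ofFamily, permVoters_viaEmbedding_ofFamily,
        Finset.map_univ_equiv]
      congr 1
      funext S
      simp [ρ, Finset.map_eq_image]
    rw [← hF.neutral _ τ hZ, hsymm, hF.anonymous _ _ hZ]
  obtain ⟨c, hc⟩ := hF.nonempty _ hZ
  refine eq_univ_of_forall fun d => ?_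
  rw [← hinv (Equiv.swap c d)]
  exact mem_image.2 ⟨c, hc, Equiv.swap_apply_left c d⟩

theorem eq_of_ballot_eqOn (hF : IsAnonNeutConsistent k F) {A B : Profile C}
    (hA : Valid k A) (hv : A.voters = B.voters)
    (hb : ∀ v ∈ A.voters, A.ballot v = B.ballot v) : F A = F B := by
  have hB : Valid k B := ⟨hv ▸ hA.1, fun v hv' => by
    rw [← hv] at hv'
    rw [← hb v hv', hA.2 v hv']⟩
  obtain ⟨i, hi⟩ := hA.1
  have : Nonempty {S : Finset C // S.card = k} := ⟨⟨A.ballot i, hA.2 i hi⟩⟩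
  obtain ⟨e⟩ := countable_iff_nonempty_embedding.mp
    (inferInstance : Countable {S : Finset C // S.card = k})
  let enc := e.trans (addLeftEmbedding (A.voters.sup id + 1))
  set Z := ofAllBallots enc
  have hZ : Valid k Z := valid_ofAllBallots enc
  have hFZ : F Z = univ := hF.eq_univ_ofAllBallots enc
  have hfresh : ∀ P : Profile C, P.voters = A.voters → P.Disj Z := by
    intro P hP
    rw [Disj, hP, Finset.disjoint_left]
    intro n hn hnZ
    obtain ⟨S, -, rfl⟩ := Finset.mem_map.1 hnZ
    have hle : enc S ≤ A.voters.sup id := Finset.le_sup (f := id) hn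
    have henc : enc S = A.voters.sup id + 1 + e S := rfl
    omega
  have hcomb : A.combine Z = B.combine Z := by
    ext1
    · simp [combine, hv]
    · funext n
      simp only [combine, hv]
      split_ifs with hn
      exacts [hb n (hv ▸ hn), rfl]
  have hcons : ∀ P, Valid k P → P.voters = A.voters → F (P.combine Z) = F P := by
    intro P hP hPv
    rw [hF.consistent P Z hP hZ (hfresh P hPv) (by simpa [hFZ] using hF.nonempty P hP), hFZ,
      inter_univ]
  rw [← hcons A hA rfl, hcomb, hcons B hB hv.symm]

theorem eq_of_bijOn (hF : IsAnonNeutConsistent k F) {A B : Profile C}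
    (hA : Valid k A) (hB : Valid k B) {i : ℕ → ℕ} (hi : Set.BijOn i A.voters B.voters)
    (hb : ∀ v ∈ A.voters, B.ballot (i v) = A.ballot v) : F A = F B := by
  have : Finite {v | v ∈ (A.voters : Set ℕ)} := A.voters.finite_toSet.to_subtype
  let π : Equiv.Perm ℕ := (hi.equiv i).extendSubtype
  have hπ : ∀ v ∈ A.voters, π v = i v := fun v hv =>
    Equiv.extendSubtype_apply_of_mem (hi.equiv i) v hv
  have hvoters : B.voters = (permVoters π A).voters := by
    apply Finset.coe_injective
    rw [permVoters, Finset.coe_map, Equiv.coe_toEmbedding, ← hi.image_eq]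
    exact Set.image_congr fun v hv => (hπ v hv).symm
  rw [← hF.anonymous A π hA]
  refine (hF.eq_of_ballot_eqOn hB hvoters fun n hn => ?_).symm
  obtain ⟨v, hv, rfl⟩ := hi.surjOn hn
  rw [hb v hv, ← hπ v hv]
  simp [permVoters]

theorem ofFamily_eq_of_injOn (hF : IsAnonNeutConsistent k F) {ι : Type*} (enc : ι ↪ ℕ)
    {s : Finset ι} {b b' : ι → Finset C} (hv : Valid k (ofFamily enc s b))
    (hv' : Valid k (ofFamily enc s b')) {φ : ι → ι} (hmaps : Set.MapsTo φ s s)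
    (hinj : Set.InjOn φ s) (hb : ∀ x ∈ s, b' (φ x) = b x) :
    F (ofFamily enc s b) = F (ofFamily enc s b') := by
  set i : ℕ → ℕ := Function.extend enc (enc ∘ φ) id
  have hi : ∀ x, i (enc x) = enc (φ x) := enc.injective.extend_apply _ _
  have hmaps' : Set.MapsTo i ↑(s.map enc) ↑(s.map enc) := by
    intro n hn
    obtain ⟨x, hx, rfl⟩ := Finset.mem_map.1 hn
    rw [hi]
    exact Finset.mem_map_of_mem enc (hmaps hx)
  refine hF.eq_of_bijOn hv hv' (i := i)
    ((Set.Finite.injOn_iff_bijOn_of_mapsTo (Finset.finite_toSet _) hmaps').1 ?_) ?_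
  · intro n hn m hm h
    obtain ⟨x, hx, rfl⟩ := Finset.mem_map.1 hn
    obtain ⟨y, hy, rfl⟩ := Finset.mem_map.1 hm
    rw [hi, hi] at h
    rw [hinj hx hy (enc.injective h)]
  · intro n hn
    obtain ⟨x, hx, rfl⟩ := Finset.mem_map.1 hn
    simp [hi, hb x hx]

theorem orbitSum_singleton (hF : IsAnonNeutConsistent k F) (enc : Equiv.Perm C × ℕ ↪ ℕ)
    {A : Profile C} (hA : Valid k A) (σ : Equiv.Perm C) :
    F (A.orbitSum enc {σ}) = (F A).image σ := by
  rw [← hF.neutral A σ hA]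
  refine (hF.eq_of_bijOn (i := fun v => enc (σ, v)) (valid_mapCand hA σ)
    (A.valid_orbitSum enc hA (Finset.singleton_nonempty σ)) ⟨?_, ?_, ?_⟩ ?_).symm
  · intro v hv
    simpa [orbitSum, mapCand] using hv
  · intro v _ w _ h
    simpa using h
  · intro n hn
    obtain ⟨⟨τ, v⟩, hx, rfl⟩ := Finset.mem_map.1 hn
    obtain ⟨hτ, hv⟩ := Finset.mem_product.1 hx
    obtain rfl : τ = σ := Finset.mem_singleton.1 hτ
    exact ⟨v, hv, rfl⟩
  · intro v _
    simp [orbitSum, mapCand]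

theorem orbitSum_eq_inf' (hF : IsAnonNeutConsistent k F) (enc : Equiv.Perm C × ℕ ↪ ℕ)
    {A : Profile C} (hA : Valid k A) {S : Finset (Equiv.Perm C)} (hS : S.Nonempty) {a : C}
    (ha : a ∈ F A) (hfix : ∀ σ ∈ S, σ a = a) :
    F (A.orbitSum enc S) = S.inf' hS fun σ => (F A).image σ := by
  have hblocks : S ×ˢ A.voters = S.biUnion fun σ => {σ} ×ˢ A.voters := by
    ext ⟨σ, v⟩
    simp
  have hdisj : (S : Set (Equiv.Perm C)).PairwiseDisjoint fun σ => {σ} ×ˢ A.voters :=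
    fun σ _ τ _ hστ => Finset.disjoint_product.2 (Or.inl (Finset.disjoint_singleton.2 hστ))
  have hblock : ∀ σ, ofFamily enc ({σ} ×ˢ A.voters) (fun x => (A.ballot x.2).image x.1)
      = A.orbitSum enc {σ} := fun _ => rfl
  rw [orbitSum, hblocks, hF.ofFamily_biUnion_eq_inf' enc _ hS hdisj
    (fun σ _ => hblock σ ▸ A.valid_orbitSum enc hA (Finset.singleton_nonempty σ)) (a := a)
    (fun σ hσ => by
      rw [hblock, hF.orbitSum_singleton enc hA]
      exact Finset.mem_image.2 ⟨a, ha, hfix σ hσ⟩)]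
  simp only [hblock, hF.orbitSum_singleton enc hA]

theorem mapCand_swap_orbitSum (hF : IsAnonNeutConsistent k F) (enc : Equiv.Perm C × ℕ ↪ ℕ)
    {A : Profile C} (hA : Valid k A) {a b : C} (hs : appScore A a = appScore A b) :
    F (mapCand (Equiv.swap a b) (A.orbitSum enc (pairStabilizer a b)))
      = F (A.orbitSum enc (pairStabilizer a b)) := by
  obtain ⟨θ, γ, hθ, hγ⟩ := exists_swap_pairing hA hs
  have hP := A.valid_orbitSum enc hA (pairStabilizer_nonempty a b)
  have hP' := valid_mapCand hP (Equiv.swap a b)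
  rw [orbitSum, mapCand_ofFamily] at hP' ⊢
  -- `γ v` carries ballot `θ v` to ballot `v`, so `swap a b * σ * γ v` carries it to the
  -- swapped ballot of voter `v` in the copy `σ A`
  refine hF.ofFamily_eq_of_injOn enc hP' hP
    (φ := fun x => (Equiv.swap a b * x.1 * γ x.2, θ x.2)) ?_ ?_ ?_
  · rintro ⟨σ, v⟩ hx
    obtain ⟨hσ, hv⟩ := Finset.mem_product.1 hx
    obtain ⟨hσa, hσb⟩ := mem_pairStabilizer.1 hσ
    obtain ⟨hγa, hγb, -⟩ := hγ v hv
    refine Finset.mem_product.2 ⟨mem_pairStabilizer.2 ⟨?_, ?_⟩, hθ v hv⟩ <;>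
      simp [hγa, hγb, hσa, hσb]
  · rintro ⟨σ, v⟩ - ⟨τ, w⟩ - h
    obtain ⟨hστ, hvw⟩ := Prod.mk.inj h
    dsimp only at hστ hvw
    obtain rfl := θ.injective hvw
    rw [mul_right_cancel_iff, mul_left_cancel_iff] at hστ
    rw [hστ]
  · rintro ⟨σ, v⟩ hx
    obtain ⟨-, hv⟩ := Finset.mem_product.1 hx
    simp only [Equiv.Perm.coe_mul, ← Finset.image_image, (hγ v hv).2.2]

theorem mem_of_appScore_eq (hF : IsAnonNeutConsistent k F) {A : Profile C} (hA : Valid k A)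
    {a b : C} (hs : appScore A a = appScore A b) (ha : a ∈ F A) : b ∈ F A := by
  obtain ⟨enc⟩ := countable_iff_nonempty_embedding.mp
    (inferInstance : Countable (Equiv.Perm C × ℕ))
  set P := A.orbitSum enc (pairStabilizer a b)
  have hP : F P = (pairStabilizer a b).inf' (pairStabilizer_nonempty a b)
      fun σ => (F A).image σ :=
    hF.orbitSum_eq_inf' enc hA _ ha fun σ hσ => (mem_pairStabilizer.1 hσ).1
  have haP : a ∈ F P := by
    rw [hP, Finset.mem_inf']
    exact fun σ hσ => Finset.mem_image.2 ⟨a, ha, (mem_pairStabilizer.1 hσ).1⟩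
  have hbP : b ∈ F P := by
    rw [← hF.mapCand_swap_orbitSum enc hA hs,
      hF.neutral _ _ (A.valid_orbitSum enc hA (pairStabilizer_nonempty a b))]
    exact Finset.mem_image.2 ⟨a, haP, Equiv.swap_apply_left a b⟩
  rw [hP, Finset.mem_inf'] at hbP
  simpa using hbP 1 (mem_pairStabilizer.2 ⟨rfl, rfl⟩)

end IsAnonNeutConsistent

theorem equal_score_equal_treatment_general (k : ℕ)
    (F : Profile C → Finset C)
    (hne : ∀ A, Valid k A → (F A).Nonempty)
    (hanon : ∀ A (π : Equiv.Perm ℕ), Valid k A → F (Profile.permVoters π A) = F A)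
    (hneut : ∀ A (τ : Equiv.Perm C), Valid k A → F (Profile.mapCand τ A) = (F A).image τ)
    (hcons : ∀ A A', Valid k A → Valid k A' → A.Disj A' →
      (F A ∩ F A').Nonempty → F (A.combine A') = F A ∩ F A') :
    ∀ A, Valid k A → ∀ a b : C, appScore A a = appScore A b → (a ∈ F A ↔ b ∈ F A) := by
  have hF : IsAnonNeutConsistent k F := ⟨hne, hanon, hneut, hcons⟩
  intro A hA a b hs
  exact ⟨hF.mem_of_appScore_eq hA hs, hF.mem_of_appScore_eq hA hs.symm⟩

/-- For an anonymous, neutral, and consistent social choice function on size-`k` ballots,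
candidates with equal approval scores are chosen or unchosen together. -/
theorem equal_score_equal_treatment (k : ℕ)
    (hk1 : 1 ≤ k) (hk2 : k < Fintype.card C)
    (F : Profile C → Finset C)
    (hne : ∀ A, Valid k A → (F A).Nonempty)
    (hanon : ∀ A (π : Equiv.Perm ℕ), Valid k A → F (Profile.permVoters π A) = F A)
    (hneut : ∀ A (τ : Equiv.Perm C), Valid k A → F (Profile.mapCand τ A) = (F A).image τ)
    (hcons : ∀ A A', Valid k A → Valid k A' → A.Disj A' →
      (F A ∩ F A').Nonempty → F (A.combine A') = F A ∩ F A') :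
    ∀ A, Valid k A → ∀ a b : C, appScore A a = appScore A b → (a ∈ F A ↔ b ∈ F A) :=
  equal_score_equal_treatment_general k F hne hanon hneut hcons
end

section
/- Every sequential Thiele rule is independent of losers: if W ∈ f(A,|W|), A' is obtained from A (same voters) with A'_i ⊆ A_i and W ∩ A'_i = W ∩ A_i for every voter i, then W ∈ f(A',|W|). -/
open Finset
open scoped Classical

variable {C : Type} [Fintype C] [DecidableEq C]

/-- A Thiele counting function: non-negative, non-decreasing, with `h 1 > h 0`. -/
def IsThiele (h : ℕ → ℝ) : Prop := (∀ x, 0 ≤ h x) ∧ Monotone h ∧ h 0 < h 1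

/-- The sequential Thiele rule induced by the counting function `h`. -/
noncomputable def seqThiele (h : ℕ → ℝ) : Profile C → ℕ → Finset (Finset C) :=
  seqRule fun b W => h ((b ∩ W).card)

/-- Every sequential Thiele rule is independent of losers: shrinking ballots outside a winning
committee `W` keeps `W` winning. -/
theorem seqThiele_independentOfLosers (h : ℕ → ℝ) (hth : IsThiele h)
    (A A' : Profile C) (W : Finset C)
    (hvoters : A'.voters = A.voters)
    (hballots : ∀ i ∈ A.voters, A'.ballot i ⊆ A.ballot i ∧ A'.ballot i ∩ W = A.ballot i ∩ W)
    (hW : W ∈ seqThiele h A W.card) :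
    W ∈ seqThiele h A' W.card := by
  set v : Finset C → Finset C → ℝ := fun b W => h ((b ∩ W).card) with hv
  have hscore_eq : ∀ S : Finset C, S ⊆ W → scoreV v A' S = scoreV v A S := by
    intro S hSW
    rw [scoreV, scoreV, hvoters]
    apply Finset.sum_congr rfl
    intro i hi
    have : A'.ballot i ∩ S = A.ballot i ∩ S := by
      have hWS : W ∩ S = S := Finset.inter_eq_right.mpr hSW
      calc A'.ballot i ∩ S = (A'.ballot i ∩ W) ∩ S := by rw [Finset.inter_assoc, hWS]
        _ = (A.ballot i ∩ W) ∩ S := by rw [(hballots i hi).2]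
        _ = A.ballot i ∩ S := by rw [Finset.inter_assoc, hWS]
    simp [hv, this]
  have hscore_le : ∀ S : Finset C, scoreV v A' S ≤ scoreV v A S := by
    intro S
    rw [scoreV, scoreV, hvoters]
    apply Finset.sum_le_sum
    intro i hi
    exact hth.2.1 (Finset.card_le_card (Finset.inter_subset_inter (hballots i hi).1 (Finset.Subset.refl _)))
  have key : ∀ k (V : Finset C), V ⊆ W → V ∈ seqRule v A k → V ∈ seqRule v A' k := by
    intro k
    induction k with
    | zero => intro V _ hV; simpa [seqRule] using hV
    | succ k ih =>
      intro V hVW hV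
      simp only [seqRule, Finset.mem_biUnion, Finset.mem_image] at hV ⊢
      obtain ⟨U, hU, x, hx, rfl⟩ := hV
      have hUW : U ⊆ W := Finset.Subset.trans (Finset.subset_insert x U) hVW
      have hxW : x ∈ W := hVW (Finset.mem_insert_self x U)
      refine ⟨U, ih U hUW hU, x, ?_, rfl⟩
      simp only [genOf, Finset.mem_filter, Finset.mem_sdiff, Finset.mem_univ, true_and] at hx ⊢
      obtain ⟨hxU, hmax⟩ := hx
      refine ⟨hxU, fun y hy => ?_⟩
      have h1 : scoreV v A' (insert y U) ≤ scoreV v A (insert y U) := hscore_le _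
      have h2 : scoreV v A' (insert x U) = scoreV v A (insert x U) :=
        hscore_eq _ (Finset.insert_subset hxW hUW)
      have h3 := hmax y hy
      linarith
  exact key W.card W (Finset.Subset.refl W) hW
end

section
/- Sequential proportional approval voting (seqPAV) is clone-proportional: let A be a profile in which n₁ voters report a common ballot A₁ and n₂ voters approve only a single candidate c ∉ A₁, and let k ≤ |A₁|. Then for every winning committee W of seqPAV at size k: if n₁/k > n₂ then c ∉ W, and if n₁/k < n₂ then c ∈ W. -/
open Finset
open scoped Classical

variable {C : Type} [Fintype C] [DecidableEq C]

/-- The PAV counting function `h(x) = Σ_{i=1}^{x} 1/i`. -/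
noncomputable def hPAV (x : ℕ) : ℝ := ∑ i ∈ Finset.range x, (1 : ℝ) / (i + 1)

/-- Sequential proportional approval voting. -/
noncomputable def seqPAV : Profile C → ℕ → Finset (Finset C) := seqThiele hPAV

lemma hPAV_zero : hPAV 0 = 0 := by simp [hPAV]

lemma hPAV_succ (n : ℕ) : hPAV (n + 1) = hPAV n + 1 / ((n : ℝ) + 1) := by
  simp [hPAV, Finset.sum_range_succ]

lemma score_formula (A : Profile C) (A₁ : Finset C) (c : C) (N₁ N₂ : Finset ℕ)
    (hdisj : Disjoint N₁ N₂) (hvoters : A.voters = N₁ ∪ N₂)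
    (hb₁ : ∀ i ∈ N₁, A.ballot i = A₁) (hb₂ : ∀ i ∈ N₂, A.ballot i = {c}) (W : Finset C) :
    scoreV (fun b W => hPAV ((b ∩ W).card)) A W
      = N₁.card * hPAV ((A₁ ∩ W).card) + N₂.card * hPAV (({c} ∩ W : Finset C).card) := by
  unfold scoreV
  rw [hvoters, Finset.sum_union hdisj]
  congr 1
  · rw [Finset.sum_congr rfl fun i hi => by rw [hb₁ i hi], Finset.sum_const, nsmul_eq_mul]
  · rw [Finset.sum_congr rfl fun i hi => by rw [hb₂ i hi], Finset.sum_const, nsmul_eq_mul]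

/-- seqPAV is clone-proportional: in a profile where `n₁` voters report the common ballot `A₁`
and `n₂` voters approve only the single candidate `c ∉ A₁`, for any committee size
`1 ≤ k ≤ |A₁|`, every winning committee excludes `c` if `n₁/k > n₂` and includes `c` if
`n₁/k < n₂`. -/
theorem seqPAV_cloneProportional (A : Profile C) (A₁ : Finset C) (c : C)
    (hc : c ∉ A₁) (hA₁ : A₁.Nonempty)
    (N₁ N₂ : Finset ℕ) (hdisj : Disjoint N₁ N₂) (hvoters : A.voters = N₁ ∪ N₂)
    (hb₁ : ∀ i ∈ N₁, A.ballot i = A₁) (hb₂ : ∀ i ∈ N₂, A.ballot i = {c})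
    (n₁ n₂ : ℕ) (hn₁ : N₁.card = n₁) (hn₂ : N₂.card = n₂)
    (k : ℕ) (hk1 : 1 ≤ k) (hk2 : k ≤ A₁.card)
    (W : Finset C) (hW : W ∈ seqPAV A k) :
    ((n₁ : ℝ) / k > n₂ → c ∉ W) ∧ ((n₁ : ℝ) / k < n₂ → c ∈ W) := by
  set v : Finset C → Finset C → ℝ := fun b W => hPAV ((b ∩ W).card) with hv
  set sc : Finset C → ℝ := scoreV v A with hsc
  have hscf : ∀ U : Finset C,
      sc U = n₁ * hPAV ((A₁ ∩ U).card) + n₂ * hPAV (({c} ∩ U : Finset C).card) := by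
    intro U
    rw [hsc, hv, score_formula A A₁ c N₁ N₂ hdisj hvoters hb₁ hb₂, hn₁, hn₂]
  -- marginal gains
  have gainA : ∀ (x : C) (U : Finset C), x ∈ A₁ → x ∉ U →
      sc (insert x U) = sc U + n₁ / (((A₁ ∩ U).card : ℝ) + 1) := by
    intro x U hxA hxU
    have hxc : x ≠ c := fun h => hc (h ▸ hxA)
    have h1 : A₁ ∩ insert x U = insert x (A₁ ∩ U) := by
      ext y
      simp only [Finset.mem_inter, Finset.mem_insert]
      constructor
      · rintro ⟨hy, rfl | hy2⟩
        · exact Or.inl rfl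
        · exact Or.inr ⟨hy, hy2⟩
      · rintro (rfl | ⟨hy1, hy2⟩)
        · exact ⟨hxA, Or.inl rfl⟩
        · exact ⟨hy1, Or.inr hy2⟩
    have h2 : ({c} : Finset C) ∩ insert x U = {c} ∩ U := by
      ext y
      simp only [Finset.mem_inter, Finset.mem_singleton, Finset.mem_insert]
      constructor
      · rintro ⟨rfl, rfl | hy⟩
        · exact absurd rfl hxc
        · exact ⟨rfl, hy⟩
      · rintro ⟨rfl, hy⟩
        exact ⟨rfl, Or.inr hy⟩
    have hxnot : x ∉ A₁ ∩ U := fun h => hxU (Finset.mem_inter.mp h).2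
    rw [hscf, hscf, h1, h2, Finset.card_insert_of_notMem hxnot, hPAV_succ]
    ring
  have gainC : ∀ U : Finset C, c ∉ U →
      sc (insert c U) = sc U + n₂ := by
    intro U hcU
    have h1 : A₁ ∩ insert c U = A₁ ∩ U := by
      ext y
      simp only [Finset.mem_inter, Finset.mem_insert]
      constructor
      · rintro ⟨hy, rfl | hy2⟩
        · exact absurd hy hc
        · exact ⟨hy, hy2⟩
      · rintro ⟨hy1, hy2⟩
        exact ⟨hy1, Or.inr hy2⟩
    have h2 : ({c} : Finset C) ∩ insert c U = {c} :=
      Finset.singleton_inter_of_mem (Finset.mem_insert_self c U)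
    have h3 : ({c} : Finset C) ∩ U = ∅ := Finset.singleton_inter_of_notMem hcU
    rw [hscf, hscf, h1, h2, h3]
    simp [hPAV_succ, hPAV_zero]
  have gain0 : ∀ (x : C) (U : Finset C), x ∉ A₁ → x ≠ c →
      sc (insert x U) = sc U := by
    intro x U hxA hxc
    have h1 : A₁ ∩ insert x U = A₁ ∩ U := by
      ext y
      simp only [Finset.mem_inter, Finset.mem_insert]
      constructor
      · rintro ⟨hy, rfl | hy2⟩
        · exact absurd hy hxA
        · exact ⟨hy, hy2⟩
      · rintro ⟨hy1, hy2⟩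
        exact ⟨hy1, Or.inr hy2⟩
    have h2 : ({c} : Finset C) ∩ insert x U = {c} ∩ U := by
      ext y
      simp only [Finset.mem_inter, Finset.mem_singleton, Finset.mem_insert]
      constructor
      · rintro ⟨rfl, rfl | hy⟩
        · exact absurd rfl (Ne.symm hxc)
        · exact ⟨rfl, hy⟩
      · rintro ⟨rfl, hy⟩
        exact ⟨rfl, Or.inr hy⟩
    rw [hscf, hscf, h1, h2]
  have hgen : ∀ (U : Finset C) (x : C), x ∈ genOf v A U ↔
      (x ∉ U ∧ ∀ y : C, y ∉ U → sc (insert y U) ≤ sc (insert x U)) := by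
    intro U x
    rw [genOf]
    simp only [Finset.mem_filter, Finset.mem_sdiff, Finset.mem_univ, true_and, ← hsc]
  have hWmem : W ∈ seqRule v A k := by
    rw [hv]
    exact hW
  constructor
  · -- n₁ / k > n₂ → c ∉ W
    intro hlt
    have key : ∀ t, t ≤ k → ∀ U ∈ seqRule v A t, U ⊆ A₁ ∧ U.card = t := by
      intro t
      induction t with
      | zero =>
        intro _ U hU
        simp only [seqRule, Finset.mem_singleton] at hU
        subst hU
        simp
      | succ t ih =>
        intro ht U hU
        simp only [seqRule, Finset.mem_biUnion, Finset.mem_image] at hU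
        obtain ⟨U', hU', x, hx, rfl⟩ := hU
        obtain ⟨hsub, hcard⟩ := ih (Nat.le_of_succ_le ht) U' hU'
        rw [hgen] at hx
        obtain ⟨hxU, hxmax⟩ := hx
        have hAU : A₁ ∩ U' = U' := Finset.inter_eq_right.mpr hsub
        have hexa : ∃ a ∈ A₁, a ∉ U' := by
          by_contra h
          push_neg at h
          have := Finset.card_le_card h
          omega
        obtain ⟨a, haA, haU⟩ := hexa
        have hga : sc (insert a U') = sc U' + n₁ / ((t : ℝ) + 1) := by
          rw [gainA a U' haA haU, hAU, hcard]
        have hb : (n₂ : ℝ) < (n₁ : ℝ) / ((t : ℝ) + 1) := by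
          refine lt_of_lt_of_le hlt ?_
          apply div_le_div_of_nonneg_left (Nat.cast_nonneg n₁)
          · positivity
          · have : (t : ℝ) + 1 ≤ (k : ℝ) := by exact_mod_cast ht
            exact this
        have hn₂0 : (0 : ℝ) ≤ n₂ := Nat.cast_nonneg n₂
        have hxA : x ∈ A₁ := by
          by_contra hxA
          have hmax := hxmax a haU
          rw [hga] at hmax
          by_cases hxc : x = c
          · subst hxc
            rw [gainC U' (fun h => hc (hsub h))] at hmax
            linarith
          · rw [gain0 x U' hxA hxc] at hmax
            linarith
        exact ⟨Finset.insert_subset hxA hsub,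
          by rw [Finset.card_insert_of_notMem hxU, hcard]⟩
    intro hcW
    exact hc ((key k le_rfl W hWmem).1 hcW)
  · -- n₁ / k < n₂ → c ∈ W
    intro hlt
    have hn₂pos : (0 : ℝ) < n₂ :=
      lt_of_le_of_lt (div_nonneg (Nat.cast_nonneg n₁) (Nat.cast_nonneg k)) hlt
    have key : ∀ t, ∀ U ∈ seqRule v A t, U.card = t ∧ (c ∈ U ∨ U ⊆ A₁) := by
      intro t
      induction t with
      | zero =>
        intro U hU
        simp only [seqRule, Finset.mem_singleton] at hU
        subst hU
        simp
      | succ t ih =>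
        intro U hU
        simp only [seqRule, Finset.mem_biUnion, Finset.mem_image] at hU
        obtain ⟨U', hU', x, hx, rfl⟩ := hU
        obtain ⟨hcard, hor⟩ := ih U' hU'
        rw [hgen] at hx
        obtain ⟨hxU, hxmax⟩ := hx
        refine ⟨by rw [Finset.card_insert_of_notMem hxU, hcard], ?_⟩
        rcases hor with hcU | hsub
        · exact Or.inl (Finset.mem_insert_of_mem hcU)
        · have hcU' : c ∉ U' := fun h => hc (hsub h)
          by_cases hxc : x = c
          · exact Or.inl (hxc ▸ Finset.mem_insert_self x U')
          · by_cases hxA : x ∈ A₁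
            · exact Or.inr (Finset.insert_subset hxA hsub)
            · exfalso
              have hmax := hxmax c hcU'
              rw [gainC U' hcU', gain0 x U' hxA hxc] at hmax
              linarith
    obtain ⟨m, rfl⟩ : ∃ m, k = m + 1 := ⟨k - 1, (Nat.succ_pred_eq_of_pos hk1).symm⟩
    simp only [seqRule, Finset.mem_biUnion, Finset.mem_image] at hWmem
    obtain ⟨U', hU', x, hx, rfl⟩ := hWmem
    obtain ⟨hcard, hor⟩ := key m U' hU'
    rw [hgen] at hx
    obtain ⟨hxU, hxmax⟩ := hx
    rcases hor with hcU | hsub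
    · exact Finset.mem_insert_of_mem hcU
    · have hcU' : c ∉ U' := fun h => hc (hsub h)
      have hAU : A₁ ∩ U' = U' := Finset.inter_eq_right.mpr hsub
      have hx_eq_c : x = c := by
        by_contra hxc
        have hmax := hxmax c hcU'
        rw [gainC U' hcU'] at hmax
        by_cases hxA : x ∈ A₁
        · rw [gainA x U' hxA hxU, hAU, hcard] at hmax
          have : ((m : ℝ) + 1) = ((m + 1 : ℕ) : ℝ) := by push_cast; ring
          rw [this] at hmax
          linarith
        · rw [gain0 x U' hxA hxc] at hmax
          linarith
      exact hx_eq_c ▸ Finset.mem_insert_self x U'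
end

section
/- seqPAV is the unique sequential Thiele rule (up to the induced rule) satisfying clone-proportionality when m ≥ 3: if a Thiele counting function h, normalized with h(0)=0 and h(1)=1, satisfies h(k) > Σ_{i=1}^{k} 1/i for the minimal k ∈ {2,...,m-1} where h(k) ≠ Σ_{i=1}^{k} 1/i, then in the profile where ℓk voters report {c₁,...,c_k} and ℓ+1 voters report {c} (for ℓ with ℓk·(h(k) − Σ_{i=1}^k 1/i) > 1 and ℓ > k−1), the induced sequential Thiele rule uniquely elects {c₁,...,c_k} at size k, violating clone-proportionality since (ℓk)/k < ℓ+1. -/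
open Finset
open scoped Classical

variable {C : Type} [Fintype C] [DecidableEq C]

/-- If a normalized Thiele counting function `h` deviates upwards from PAV at the minimal
deviation point `k ∈ {2,...,m-1}`, then in the profile with `ℓk` voters reporting the common
ballot `S = {c₁,...,c_k}` and `ℓ+1` voters approving only `c ∉ S` (for suitable `ℓ`), the
sequential Thiele rule induced by `h` uniquely elects `S` at size `k`, violating
clone-proportionality since `(ℓk)/k < ℓ+1`. -/
theorem thiele_above_pav_violates_cloneProportionality
    (hm : 3 ≤ Fintype.card C)
    (h : ℕ → ℝ) (hpos : ∀ x, 0 ≤ h x) (hmono : Monotone h)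
    (h0 : h 0 = 0) (h1 : h 1 = 1)
    (k : ℕ) (hk2 : 2 ≤ k) (hkm : k ≤ Fintype.card C - 1)
    (hmin : ∀ j, j < k → h j = hPAV j) (hgt : h k > hPAV k)
    (ℓ : ℕ) (hℓ1 : (ℓ : ℝ) * k * (h k - hPAV k) > 1) (hℓ2 : k - 1 < ℓ)
    (S : Finset C) (hS : S.card = k) (c : C) (hcS : c ∉ S)
    (A : Profile C) (N₁ N₂ : Finset ℕ) (hdisj : Disjoint N₁ N₂)
    (hvoters : A.voters = N₁ ∪ N₂)
    (hn₁ : N₁.card = ℓ * k) (hn₂ : N₂.card = ℓ + 1)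
    (hb₁ : ∀ i ∈ N₁, A.ballot i = S) (hb₂ : ∀ i ∈ N₂, A.ballot i = {c}) :
    seqThiele h A k = {S} := by
  classical
  set v : Finset C → Finset C → ℝ := fun b W => h ((b ∩ W).card) with hv
  have hk0 : (0:ℝ) < (k:ℝ) := by positivity
  have hkℓ : k ≤ ℓ := by omega
  -- score formula
  have hscore : ∀ W : Finset C,
      scoreV v A W = (ℓ:ℝ) * (k:ℝ) * h ((S ∩ W).card)
        + ((ℓ:ℝ)+1) * h ((({c} : Finset C) ∩ W).card) := by
    intro W
    unfold scoreV
    rw [hvoters, Finset.sum_union hdisj]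
    have e1 : ∑ i ∈ N₁, v (A.ballot i) W = (N₁.card : ℝ) * h ((S ∩ W).card) := by
      rw [Finset.sum_congr rfl fun i hi => by rw [hv, hb₁ i hi]]
      rw [Finset.sum_const, nsmul_eq_mul]
    have e2 : ∑ i ∈ N₂, v (A.ballot i) W
        = (N₂.card : ℝ) * h ((({c} : Finset C) ∩ W).card) := by
      rw [Finset.sum_congr rfl fun i hi => by rw [hv, hb₂ i hi]]
      rw [Finset.sum_const, nsmul_eq_mul]
    rw [e1, e2, hn₁, hn₂]
    push_cast
    ring
  -- the key numeric step
  have hstep : ∀ t : ℕ, t + 1 ≤ k →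
      (ℓ:ℝ) * (k:ℝ) * h t + ((ℓ:ℝ)+1) < (ℓ:ℝ) * (k:ℝ) * h (t+1) := by
    intro t ht
    have hht : h t = hPAV t := hmin t (by omega)
    have hp : hPAV (t+1) = hPAV t + 1/((t:ℝ)+1) := by
      simp [hPAV, Finset.sum_range_succ]
    rcases eq_or_lt_of_le ht with heq | hlt
    · -- t + 1 = k
      have hk' : (k:ℝ) = (t:ℝ) + 1 := by rw [← heq]; push_cast; ring
      have e : (ℓ:ℝ) * (k:ℝ) * (1/((t:ℝ)+1)) = (ℓ:ℝ) := by
        rw [hk']; field_simp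
      have hpk : hPAV k = hPAV t + 1/((t:ℝ)+1) := by rw [← heq]; exact hp
      have e2 : (ℓ:ℝ) * (k:ℝ) * hPAV k = (ℓ:ℝ) * (k:ℝ) * h t + (ℓ:ℝ) := by
        rw [hpk, mul_add, e, hht]
      have e3 : (ℓ:ℝ) * (k:ℝ) * (h k - hPAV k)
          = (ℓ:ℝ) * (k:ℝ) * h k - (ℓ:ℝ) * (k:ℝ) * hPAV k := by ring
      rw [e3] at hℓ1
      have : h (t+1) = h k := by rw [heq]
      rw [this]
      linarith
    · -- t + 1 < k
      have hht1 : h (t+1) = hPAV (t+1) := hmin _ hlt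
      have hA : (t:ℝ) + 2 ≤ (k:ℝ) := by exact_mod_cast (by omega : t + 2 ≤ k)
      have hB : (k:ℝ) ≤ (ℓ:ℝ) := by exact_mod_cast hkℓ
      have key : ((ℓ:ℝ)+1) * ((t:ℝ)+1) < (ℓ:ℝ) * (k:ℝ) := by
        nlinarith [mul_le_mul_of_nonneg_left
          (show (t:ℝ)+1 ≤ (k:ℝ)-1 by linarith)
          (show (0:ℝ) ≤ (ℓ:ℝ)+1 by positivity)]
      have hdiv : (ℓ:ℝ)+1 < (ℓ:ℝ) * (k:ℝ) / ((t:ℝ)+1) :=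
        (lt_div_iff₀ (by positivity)).mpr key
      have e : (ℓ:ℝ) * (k:ℝ) * (1/((t:ℝ)+1)) = (ℓ:ℝ) * (k:ℝ) / ((t:ℝ)+1) := by
        ring
      rw [hht, hht1, hp, mul_add, e]
      linarith
  -- score of adding a member of S
  have hSin : ∀ W : Finset C, W ⊆ S → ∀ x ∈ S \ W,
      scoreV v A (insert x W) = (ℓ:ℝ) * (k:ℝ) * h (W.card + 1) := by
    intro W hWS x hx
    rw [Finset.mem_sdiff] at hx
    have h1 : S ∩ insert x W = insert x W := by
      rw [Finset.inter_eq_right]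
      exact Finset.insert_subset hx.1 hWS
    have hc : c ∉ insert x W := by
      intro hc
      rcases Finset.mem_insert.mp hc with rfl | hcW
      · exact hcS hx.1
      · exact hcS (hWS hcW)
    have h2 : ({c} : Finset C) ∩ insert x W = ∅ :=
      Finset.singleton_inter_of_notMem hc
    rw [hscore, h1, h2, Finset.card_insert_of_notMem hx.2, Finset.card_empty,
      h0, mul_zero, add_zero]
  -- score of adding anything outside S
  have hOther : ∀ W : Finset C, W ⊆ S → ∀ y, y ∉ S →
      scoreV v A (insert y W) ≤ (ℓ:ℝ) * (k:ℝ) * h W.card + ((ℓ:ℝ)+1) := by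
    intro W hWS y hyS
    have hSW1 : S ∩ insert y W = W := by
      rw [Finset.inter_insert_of_notMem hyS, Finset.inter_eq_right.mpr hWS]
    have h2 : h ((({c} : Finset C) ∩ insert y W).card) ≤ 1 := by
      have hcard : (({c} : Finset C) ∩ insert y W).card ≤ 1 := by
        calc (({c} : Finset C) ∩ insert y W).card ≤ ({c} : Finset C).card :=
              Finset.card_le_card (Finset.inter_subset_left)
          _ = 1 := Finset.card_singleton c
      calc h ((({c} : Finset C) ∩ insert y W).card) ≤ h 1 := hmono hcard
        _ = 1 := h1
    rw [hscore, hSW1]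
    have hℓpos : (0:ℝ) ≤ (ℓ:ℝ)+1 := by positivity
    nlinarith [h2, hℓpos]
  -- the generating set in each round
  have hgen : ∀ W : Finset C, W ⊆ S → W.card < k → genOf v A W = S \ W := by
    intro W hWS hWk
    have hne : (S \ W).Nonempty := by
      rw [Finset.sdiff_nonempty]
      intro hSW
      have := Finset.card_le_card hSW
      omega
    obtain ⟨x₀, hx₀⟩ := hne
    have hx₀score := hSin W hWS x₀ hx₀
    have hlt := hstep W.card (by omega)
    have hx₀U : x₀ ∈ univ \ W :=
      Finset.mem_sdiff.mpr ⟨Finset.mem_univ _, (Finset.mem_sdiff.mp hx₀).2⟩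
    ext z
    simp only [genOf, Finset.mem_filter, Finset.mem_sdiff, Finset.mem_univ, true_and]
    constructor
    · rintro ⟨hzW, hmax⟩
      refine ⟨?_, hzW⟩
      by_contra hzS
      have hub := hOther W hWS z hzS
      have hlb := hmax x₀ (Finset.mem_sdiff.mp hx₀).2
      rw [hx₀score] at hlb
      linarith
    · rintro ⟨hzS, hzW⟩
      refine ⟨hzW, ?_⟩
      intro y hy
      rw [hSin W hWS z (Finset.mem_sdiff.mpr ⟨hzS, hzW⟩)]
      by_cases hyS : y ∈ S
      · rw [hSin W hWS y (Finset.mem_sdiff.mpr ⟨hyS, hy⟩)]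
      · exact le_of_lt (lt_of_le_of_lt (hOther W hWS y hyS) hlt)
  -- main induction
  have hmain : ∀ t, t ≤ k → seqRule v A t = S.powersetCard t := by
    intro t
    induction t with
    | zero => intro _; simp [seqRule]
    | succ t ih =>
      intro ht
      rw [seqRule, ih (by omega)]
      ext W'
      simp only [Finset.mem_biUnion, Finset.mem_powersetCard, Finset.mem_image]
      constructor
      · rintro ⟨W, ⟨hWS, hWc⟩, x, hx, rfl⟩
        rw [hgen W hWS (by omega)] at hx
        rw [Finset.mem_sdiff] at hx
        exact ⟨Finset.insert_subset hx.1 hWS,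
          by rw [Finset.card_insert_of_notMem hx.2, hWc]⟩
      · rintro ⟨hWS', hWc'⟩
        have hne : W'.Nonempty := by
          rw [← Finset.card_pos, hWc']; omega
        obtain ⟨x, hx⟩ := hne
        have hsub : W'.erase x ⊆ S := (W'.erase_subset x).trans hWS'
        refine ⟨W'.erase x, ⟨hsub, by rw [Finset.card_erase_of_mem hx, hWc']; omega⟩,
          x, ?_, Finset.insert_erase hx⟩
        rw [hgen _ hsub (by rw [Finset.card_erase_of_mem hx, hWc']; omega)]
        exact Finset.mem_sdiff.mpr ⟨hWS' hx, Finset.notMem_erase x W'⟩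
  show seqRule (fun b W => h ((b ∩ W).card)) A k = {S}
  rw [← hv, hmain k le_rfl, ← hS, Finset.powersetCard_self]
end
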